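/- arXiv:1808.01432 — 6 statements merged into one kernel-verified Lean document; each statement's English description precedes it below -/
import Mathlib

section
/- The generating function for partitions into at most n parts where no odd part repeats is (-q; q²)_n / (q²; q²)_n; that is, the coefficient of q^N in (-q;q²)_n/(q²;q²)_n equals the number of partitions of N into at most n parts in which every odd part occurs at most once. -/
open Finset PowerSeries

/-- `l` is a partition of `n`: a nondecreasing list of positive integers summing to `n`. -/
def IsPartitionOf (n : ℕ) (l : List ℕ) : Prop :=
  l.Pairwise (· ≤ ·) ∧ (∀ x ∈ l, 0 < x) ∧ l.sum = n

/-- `l` has difference at least `k` at distance `d`. -/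
def DiffCond (k d : ℕ) (l : List ℕ) : Prop :=
  ∀ (j : ℕ) (h : j + d < l.length), l[j]'(by omega) + k ≤ l[j + d]'h

/-- If two successive parts differ by at most one, then their sum is ≡ `r` (mod 3). -/
def SumCond2 (r : ℕ) (l : List ℕ) : Prop :=
  ∀ (j : ℕ) (h : j + 1 < l.length),
    l[j + 1]'h ≤ l[j]'(by omega) + 1 → (l[j]'(by omega) + l[j + 1]'h) % 3 = r

/-- If parts at distance two differ by at most one, then their sum, together with the
intermediate part, is ≡ `r` (mod 3). -/
def SumCond3 (r : ℕ) (l : List ℕ) : Prop :=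
  ∀ (j : ℕ) (h : j + 2 < l.length),
    l[j + 2]'h ≤ l[j]'(by omega) + 1 →
      (l[j]'(by omega) + l[j + 1]'(by omega) + l[j + 2]'h) % 3 = r

/-- `(q; q)_n` as a formal power series in `q = X`. -/
noncomputable def qq (n : ℕ) : PowerSeries ℚ :=
  ∏ j ∈ Finset.range n, (1 - (X : PowerSeries ℚ) ^ (j + 1))

/-- `(q^2; q^2)_n`. -/
noncomputable def qsq (n : ℕ) : PowerSeries ℚ :=
  ∏ j ∈ Finset.range n, (1 - (X : PowerSeries ℚ) ^ (2 * (j + 1)))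

/-- `(q^3; q^3)_n`. -/
noncomputable def qcube (n : ℕ) : PowerSeries ℚ :=
  ∏ j ∈ Finset.range n, (1 - (X : PowerSeries ℚ) ^ (3 * (j + 1)))

/-- `(q^4; q^4)_n`. -/
noncomputable def qfour (n : ℕ) : PowerSeries ℚ :=
  ∏ j ∈ Finset.range n, (1 - (X : PowerSeries ℚ) ^ (4 * (j + 1)))

/-- `(-q; q^2)_n`. -/
noncomputable def nqodd (n : ℕ) : PowerSeries ℚ :=
  ∏ j ∈ Finset.range n, (1 + (X : PowerSeries ℚ) ^ (2 * j + 1))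

/-!
Pad a partition into at most `n` parts with zeros to a weakly increasing sequence of exactly
`n` naturals. For such a sequence of length `n + 1` look at its smallest entry `t`: if `t = 0`,
drop it; if `t = 1`, the other entries are at least `2` (odd parts do not repeat), and
subtracting `2` from them leaves a sequence of length `n` and weight `N - (2n + 1)`; if `t ≥ 2`,
subtracting `2` from every entry leaves a sequence of length `n + 1` and weight `N - (2n + 2)`.
Subtracting `2` preserves parities, so the condition on odd parts is preserved both ways. For
the generating functions `G n` this gives `G (n + 1) * (1 - q^(2n+2)) = G n * (1 + q^(2n+1))`
and `G 0 = 1`.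
-/

def NoRepeatedOdd (l : List ℕ) : Prop :=
  ∀ x : ℕ, x % 2 = 1 → l.count x ≤ 1

def oddDistinctPartitions (n : ℕ) : Set (List ℕ) :=
  {l | l.Pairwise (· ≤ ·) ∧ (∀ x ∈ l, 0 < x) ∧ l.length ≤ n ∧ NoRepeatedOdd l}

def oddDistinctPadded (n : ℕ) : Set (List ℕ) :=
  {l | l.Pairwise (· ≤ ·) ∧ l.length = n ∧ NoRepeatedOdd l}

def padZeros (n : ℕ) (l : List ℕ) : List ℕ :=
  List.replicate (n - l.length) 0 ++ l

noncomputable def sumGenFun (A : Set (List ℕ)) : PowerSeries ℚ :=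
  PowerSeries.mk fun N => ((A ∩ {l | l.sum = N}).ncard : ℚ)

theorem sumGenFun_union {A B : Set (List ℕ)} (h : Disjoint A B)
    (hfin : ∀ N, ((A ∪ B) ∩ {l | l.sum = N}).Finite) :
    sumGenFun (A ∪ B) = sumGenFun A + sumGenFun B := by
  ext N
  have hfinN := hfin N
  simp only [sumGenFun, coeff_mk, map_add]
  rw [Set.union_inter_distrib_right] at hfinN ⊢
  rw [Set.ncard_union_eq (h.mono Set.inter_subset_left Set.inter_subset_left)
    (hfinN.subset Set.subset_union_left) (hfinN.subset Set.subset_union_right), Nat.cast_add]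

theorem sumGenFun_image {A : Set (List ℕ)} {f : List ℕ → List ℕ} (hf : Set.InjOn f A)
    (k : ℕ)
    (hk : ∀ l ∈ A, (f l).sum = l.sum + k) :
    sumGenFun (f '' A) = X ^ k * sumGenFun A := by
  ext N
  have hfiber : f '' A ∩ {l | l.sum = N} = f '' (A ∩ {l | l.sum + k = N}) := by
    ext l
    constructor
    · rintro ⟨⟨μ, hμ, rfl⟩, hsum⟩
      exact ⟨μ, ⟨hμ, (hk μ hμ).symm.trans hsum⟩, rfl⟩
    · rintro ⟨μ, ⟨hμ, hsum⟩, rfl⟩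
      exact ⟨⟨μ, hμ, rfl⟩, (hk μ hμ).trans hsum⟩
  simp only [sumGenFun, coeff_mk, coeff_X_pow_mul', hfiber,
    (hf.mono Set.inter_subset_left).ncard_image]
  split_ifs with hkN
  · congr 3
    ext l
    simp only [Set.mem_ofPred_eq]
    omega
  · have hempty : A ∩ {l | l.sum + k = N} = ∅ :=
      Set.eq_empty_of_forall_notMem fun l hl => hkN (by
        simp only [Set.mem_inter_iff, Set.mem_ofPred_eq] at hl
        omega)
    simp [hempty]

theorem sum_map_add_right (l : List ℕ) (c : ℕ) :
    (l.map (· + c)).sum = l.sum + l.length * c := by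
  simp [List.sum_map_add]

theorem count_map_add_right (l : List ℕ) (c x : ℕ) :
    (l.map (· + c)).count (x + c) = l.count x :=
  List.count_map_of_injective l _ (add_left_injective c) x

theorem map_sub_map_add {l : List ℕ} {c : ℕ} (h : ∀ x ∈ l, c ≤ x) :
    (l.map (· - c)).map (· + c) = l := by
  rw [List.map_map]
  exact (List.map_congr_left fun x hx => Nat.sub_add_cancel (h x hx)).trans (List.map_id l)

theorem noRepeatedOdd_map_add_two_iff {l : List ℕ} :
    NoRepeatedOdd (l.map (· + 2)) ↔ NoRepeatedOdd l := by
  refine ⟨fun h x hx => ?_, fun h x hx => ?_⟩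
  · rw [← count_map_add_right l 2 x]
    exact h (x + 2) (by omega)
  · by_cases hx2 : 2 ≤ x
    · obtain ⟨y, rfl⟩ := Nat.exists_eq_add_of_le' hx2
      rw [count_map_add_right]
      exact h y (by omega)
    · rw [List.count_eq_zero.mpr]
      · omega
      · simp only [List.mem_map, not_exists, not_and]
        omega

theorem noRepeatedOdd_cons_iff {t : ℕ} {l : List ℕ} :
    NoRepeatedOdd (t :: l) ↔ NoRepeatedOdd l ∧ (t % 2 = 1 → t ∉ l) := by
  simp only [NoRepeatedOdd, List.count_cons, beq_iff_eq]
  constructor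
  · intro h
    refine ⟨fun x hx => (Nat.le_add_right _ _).trans (h x hx), fun ht hmem => ?_⟩
    have htwice := h t ht
    rw [if_pos rfl] at htwice
    have := List.count_pos_iff.mpr hmem
    omega
  · rintro ⟨h, ht⟩ x hx
    split_ifs with htx
    · subst htx
      rw [List.count_eq_zero.mpr (ht hx)]
    · simpa using h x hx

theorem map_add_two_mem_oddDistinctPadded_iff {n : ℕ} {l : List ℕ} :
    l.map (· + 2) ∈ oddDistinctPadded n ↔ l ∈ oddDistinctPadded n := by
  simp only [oddDistinctPadded, Set.mem_ofPred_eq, List.pairwise_map, add_le_add_iff_right,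
    List.length_map, noRepeatedOdd_map_add_two_iff]

theorem cons_mem_oddDistinctPadded_iff {n t : ℕ} {l : List ℕ} :
    t :: l ∈ oddDistinctPadded (n + 1) ↔
      l ∈ oddDistinctPadded n ∧ (∀ x ∈ l, t ≤ x) ∧ (t % 2 = 1 → t ∉ l) := by
  simp only [oddDistinctPadded, Set.mem_ofPred_eq, List.pairwise_cons, List.length_cons,
    Nat.add_right_cancel_iff, noRepeatedOdd_cons_iff]
  tauto

theorem oddDistinctPadded_succ (n : ℕ) :
    oddDistinctPadded (n + 1) =
      List.cons 0 '' oddDistinctPadded n ∪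
        (fun l => 1 :: l.map (· + 2)) '' oddDistinctPadded n ∪
          List.map (· + 2) '' oddDistinctPadded (n + 1) := by
  ext l
  constructor
  · intro hl
    obtain ⟨t, r, rfl⟩ : ∃ t r, l = t :: r :=
      List.exists_cons_of_length_eq_add_one hl.2.1
    obtain ⟨hr, hmin, hodd⟩ := cons_mem_oddDistinctPadded_iff.mp hl
    rcases Nat.lt_trichotomy t 1 with ht | rfl | ht
    · exact .inl (.inl ⟨r, hr, by rw [Nat.lt_one_iff.mp ht]⟩)
    · have hr2 : ∀ x ∈ r, 2 ≤ x := fun x hx =>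
        (hmin x hx).lt_of_ne fun h => hodd rfl (by rwa [h])
      refine .inl (.inr ⟨r.map (· - 2), ?_, by simp only [map_sub_map_add hr2]⟩)
      rwa [← map_add_two_mem_oddDistinctPadded_iff, map_sub_map_add hr2]
    · have hl2 : ∀ x ∈ t :: r, 2 ≤ x := by
        simp only [List.mem_cons, forall_eq_or_imp]
        exact ⟨ht, fun x hx => ht.trans_le (hmin x hx)⟩
      refine .inr ⟨(t :: r).map (· - 2), ?_, map_sub_map_add hl2⟩
      rwa [← map_add_two_mem_oddDistinctPadded_iff, map_sub_map_add hl2]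
  · rintro ((⟨r, hr, rfl⟩ | ⟨r, hr, rfl⟩) | ⟨r, hr, rfl⟩)
    · exact cons_mem_oddDistinctPadded_iff.mpr ⟨hr, fun x _ => x.zero_le, by omega⟩
    · have hr2 : ∀ x ∈ r.map (· + 2), 2 ≤ x := by simp
      refine cons_mem_oddDistinctPadded_iff.mpr
        ⟨map_add_two_mem_oddDistinctPadded_iff.mpr hr, fun x hx => ?_, fun _ h => ?_⟩
      · have := hr2 x hx
        omega
      · have := hr2 1 h
        omega
    · exact map_add_two_mem_oddDistinctPadded_iff.mpr hr

theorem finite_length_eq_forall_le (n N : ℕ) :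
    {l : List ℕ | l.length = n ∧ ∀ x ∈ l, x ≤ N}.Finite := by
  refine ((List.finite_length_eq (Fin (N + 1)) n).image (List.map Fin.val)).subset ?_
  rintro l ⟨hlen, hle⟩
  refine ⟨l.map (Fin.ofNat (N + 1)), by simpa using hlen, ?_⟩
  rw [List.map_map]
  refine (List.map_congr_left fun x hx => ?_).trans (List.map_id l)
  simp [Nat.mod_eq_of_lt (Nat.lt_succ_of_le (hle x hx))]

theorem finite_oddDistinctPadded_inter_sum_eq (n N : ℕ) :
    (oddDistinctPadded n ∩ {l | l.sum = N}).Finite :=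
  (finite_length_eq_forall_le n N).subset fun _ ⟨hl, hsum⟩ =>
    ⟨hl.2.1, fun _ hx => hsum ▸ List.le_sum_of_mem hx⟩

theorem sumGenFun_oddDistinctPadded_succ (n : ℕ) :
    sumGenFun (oddDistinctPadded (n + 1)) =
      sumGenFun (oddDistinctPadded n) + X ^ (2 * n + 1) * sumGenFun (oddDistinctPadded n) +
        X ^ (2 * n + 2) * sumGenFun (oddDistinctPadded (n + 1)) := by
  have hhead (l : List ℕ) :
      (l.map (· + 2)).head? ≠ some 0 ∧ (l.map (· + 2)).head? ≠ some 1 := by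
    cases l <;> simp
  have hdisj₁ : Disjoint (List.cons 0 '' oddDistinctPadded n)
      ((fun l => 1 :: l.map (· + 2)) '' oddDistinctPadded n) := by
    rw [Set.disjoint_left]
    rintro _ ⟨_, -, rfl⟩ ⟨_, -, h⟩
    simp at h
  have hdisj₂ : Disjoint (List.cons 0 '' oddDistinctPadded n ∪
      (fun l => 1 :: l.map (· + 2)) '' oddDistinctPadded n)
      (List.map (· + 2) '' oddDistinctPadded (n + 1)) := by
    rw [Set.disjoint_left]
    rintro _ (⟨_, -, rfl⟩ | ⟨_, -, rfl⟩) ⟨l, -, h⟩ <;> apply_fun List.head? at h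
    exacts [(hhead l).1 h, (hhead l).2 h]
  have hfin := finite_oddDistinctPadded_inter_sum_eq (n + 1)
  conv_lhs => rw [oddDistinctPadded_succ]
  rw [oddDistinctPadded_succ] at hfin
  rw [sumGenFun_union hdisj₂ hfin, sumGenFun_union hdisj₁
    fun N => (hfin N).subset (Set.inter_subset_inter_left _ Set.subset_union_left)]
  have hmap : Function.Injective (List.map (· + 2)) :=
    List.map_injective_iff.mpr (add_left_injective 2)
  rw [sumGenFun_image List.cons_injective.injOn 0 (fun l _ => by simp),
    sumGenFun_image (f := fun l => 1 :: l.map (· + 2)) (List.cons_injective.comp hmap).injOn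
      (2 * n + 1) (fun l hl => by rw [List.sum_cons, sum_map_add_right, hl.2.1]; ring),
    sumGenFun_image hmap.injOn (2 * n + 2)
      (fun l hl => by rw [sum_map_add_right, hl.2.1]; ring),
    pow_zero, one_mul]

theorem filter_pos_padZeros (n : ℕ) {l : List ℕ} (h : ∀ x ∈ l, 0 < x) :
    (padZeros n l).filter (0 < ·) = l := by
  simpa [padZeros, List.filter_append] using h

theorem padZeros_filter_pos {l : List ℕ} (hl : l.Pairwise (· ≤ ·)) :
    padZeros l.length (l.filter (0 < ·)) = l := by
  induction l with
  | nil => rfl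
  | cons t r ih =>
    rcases Nat.eq_zero_or_pos t with rfl | ht
    · have hlen : (r.filter (0 < ·)).length ≤ r.length := List.length_filter_le _ _
      have hfilter : (0 :: r).filter (0 < ·) = r.filter (0 < ·) :=
        List.filter_cons_of_neg (by simp)
      rw [padZeros, hfilter, List.length_cons, Nat.succ_sub hlen, List.replicate_succ,
        List.cons_append, ← padZeros, ih hl.of_cons]
    · have hpos : ∀ x ∈ t :: r, 0 < x := by
        simp only [List.mem_cons, forall_eq_or_imp]
        exact ⟨ht, fun x hx => ht.trans_le (List.rel_of_pairwise_cons hl hx)⟩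
      have hfilter : (t :: r).filter (0 < ·) = t :: r :=
        List.filter_eq_self.mpr (by simpa using hpos)
      rw [padZeros, hfilter, Nat.sub_self, List.replicate_zero, List.nil_append]

theorem oddDistinctPadded_eq_image_padZeros (n : ℕ) :
    oddDistinctPadded n = padZeros n '' oddDistinctPartitions n := by
  ext l
  constructor
  · rintro ⟨hsorted, rfl, hodd⟩
    refine ⟨l.filter (0 < ·), ⟨hsorted.filter _, by simp, List.length_filter_le _ _,
      fun x hx => (List.filter_sublist.count_le x).trans (hodd x hx)⟩,
      padZeros_filter_pos hsorted⟩
  · rintro ⟨μ, ⟨hsorted, hpos, hlen, hodd⟩, rfl⟩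
    refine ⟨?_, by rw [padZeros, List.length_append, List.length_replicate]; omega,
      fun x hx => ?_⟩
    · simp only [padZeros, List.pairwise_append, List.pairwise_replicate, le_refl, or_true,
        true_and, hsorted]
      intro a ha b _
      rw [List.eq_of_mem_replicate ha]
      exact b.zero_le
    · rw [padZeros, List.count_append, List.count_replicate]
      simpa [show 0 ≠ x by omega] using hodd x hx

theorem sumGenFun_oddDistinctPartitions (n : ℕ) :
    sumGenFun (oddDistinctPartitions n) = sumGenFun (oddDistinctPadded n) := by
  have hinj : Set.InjOn (padZeros n) (oddDistinctPartitions n) := fun μ hμ ν hν h => by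
    rw [← filter_pos_padZeros n hμ.2.1, h, filter_pos_padZeros n hν.2.1]
  rw [oddDistinctPadded_eq_image_padZeros,
    sumGenFun_image hinj 0 (fun l _ => by simp [padZeros]), pow_zero, one_mul]

theorem sumGenFun_oddDistinctPadded_mul_qsq (n : ℕ) :
    sumGenFun (oddDistinctPadded n) * qsq n = nqodd n := by
  induction n with
  | zero =>
    have hzero : oddDistinctPadded 0 = {[]} := by
      ext l
      refine ⟨fun hl => List.length_eq_zero_iff.mp hl.2.1, ?_⟩
      rintro rfl
      exact ⟨List.Pairwise.nil, rfl, fun _ _ => by simp⟩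
    rw [qsq, nqodd, Finset.prod_range_zero, Finset.prod_range_zero, mul_one, hzero]
    ext N
    rw [sumGenFun, coeff_mk, coeff_one]
    split_ifs with hN
    · rw [Set.singleton_inter_of_mem (by simp [hN])]
      simp
    · rw [Set.singleton_inter_of_notMem
        (show [] ∉ {l : List ℕ | l.sum = N} from fun h => hN (Eq.symm h))]
      simp
  | succ n ih =>
    have hrec := sumGenFun_oddDistinctPadded_succ n
    simp only [qsq, nqodd, Finset.prod_range_succ] at ih ⊢
    linear_combination (1 + X ^ (2 * n + 1)) * ih + (∏ j ∈ Finset.range n,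
      (1 - (X : PowerSeries ℚ) ^ (2 * (j + 1)))) * hrec

theorem constantCoeff_qsq (n : ℕ) : constantCoeff (qsq n) = 1 := by
  simp [qsq, map_prod]

/-- The coefficient of `q^N` in `(-q; q²)_n / (q²; q²)_n` equals the number of
partitions of `N` into at most `n` parts in which no odd part repeats. -/
theorem distinct_odds_gf (n N : ℕ) :
    PowerSeries.coeff N (nqodd n * (qsq n)⁻¹) =
      (Set.ncard {l : List ℕ | l.Pairwise (· ≤ ·) ∧ (∀ x ∈ l, 0 < x) ∧ l.sum = N ∧
        l.length ≤ n ∧ ∀ x : ℕ, x % 2 = 1 → l.count x ≤ 1} : ℚ) := by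
  have hgf : nqodd n * (qsq n)⁻¹ = sumGenFun (oddDistinctPartitions n) := by
    rw [eq_comm, PowerSeries.eq_mul_inv_iff_mul_eq (by rw [constantCoeff_qsq]; exact one_ne_zero),
      sumGenFun_oddDistinctPartitions, sumGenFun_oddDistinctPadded_mul_qsq]
  rw [hgf, sumGenFun, coeff_mk]
  congr 2
  ext l
  simp only [oddDistinctPartitions, NoRepeatedOdd, Set.mem_inter_iff, Set.mem_ofPred_eq]
  tauto
end

section
/- Let kr_1(n,m) and kr_4(n,m) be as follows: kr_1(n,m) counts partitions of n into m parts with difference at least three at distance two such that if two successive parts differ by at most one then their sum is ≡ 0 (mod 3); kr_4(n,m) counts partitions of n into m parts with smallest part at least two, difference at least three at distance two, such that if two successive parts differ by at most one then their sum is ≡ 2 (mod 3). Then for all n,m, kr_4(n,m) = kr_1(n−m, m), i.e., adding 1 to every part of a partition counted by kr_1(n,m) yields exactly the partitions counted by kr_4(n+m, m). -/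
open Finset PowerSeries

/-- `kr₁ n m`: partitions of `n` into `m` parts with difference at least three at
distance two such that if two successive parts differ by at most one, their sum is
divisible by three. -/
noncomputable def kr1 (n m : ℕ) : ℕ :=
  Set.ncard {l : List ℕ |
    IsPartitionOf n l ∧ l.length = m ∧ DiffCond 3 2 l ∧ SumCond2 0 l}

/-- `kr₄ n m`: partitions of `n` into `m` parts, smallest part at least two, difference
at least three at distance two, close successive sums ≡ 2 (mod 3). -/
noncomputable def kr4 (n m : ℕ) : ℕ :=
  Set.ncard {l : List ℕ |
    IsPartitionOf n l ∧ l.length = m ∧ (∀ x ∈ l, 2 ≤ x) ∧ DiffCond 3 2 l ∧ SumCond2 2 l}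

lemma sum_map_add_one (l : List ℕ) : (l.map (· + 1)).sum = l.sum + l.length := by
  induction l with
  | nil => simp
  | cons a t ih => simp [ih]; omega

/-- Adding 1 to every part of a partition counted by `kr₁ n m` yields exactly the
partitions counted by `kr₄ (n + m) m`. -/
theorem kr4_eq_kr1_shift (n m : ℕ) : kr4 (n + m) m = kr1 n m := by
  have hinj : Function.Injective (List.map (· + 1) : List ℕ → List ℕ) :=
    List.map_injective_iff.mpr (fun x y h => by omega)
  have hset : {l : List ℕ |
      IsPartitionOf (n + m) l ∧ l.length = m ∧ (∀ x ∈ l, 2 ≤ x) ∧ DiffCond 3 2 l ∧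
        SumCond2 2 l} =
      (List.map (· + 1)) '' {l : List ℕ |
        IsPartitionOf n l ∧ l.length = m ∧ DiffCond 3 2 l ∧ SumCond2 0 l} := by
    ext l
    simp only [Set.mem_setOf_eq, Set.mem_image]
    constructor
    · rintro ⟨⟨hs, hpos, hsum⟩, hlen, h2, hd, hsc⟩
      have hback : (l.map (· - 1)).map (· + 1) = l := by
        rw [List.map_map]
        conv_rhs => rw [← List.map_id l]
        apply List.map_congr_left
        intro x hx; have := h2 x hx; simp; omega
      refine ⟨l.map (· - 1), ⟨⟨?_, ?_, ?_⟩, ?_, ?_, ?_⟩, hback⟩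
      · exact List.Pairwise.map _ (fun a b h => by omega) hs
      · intro x hx
        simp only [List.mem_map] at hx
        obtain ⟨a, ha, rfl⟩ := hx
        have := h2 a ha; omega
      · have := sum_map_add_one (l.map (· - 1))
        rw [hback] at this
        simp only [List.length_map] at this
        omega
      · simp [hlen]
      · intro j h
        simp only [List.length_map] at h
        simp only [List.getElem_map]
        have := hd j (by simpa using h)
        have h1 := h2 (l[j]'(by omega)) (List.getElem_mem _)
        omega
      · intro j h
        simp only [List.length_map] at h
        simp only [List.getElem_map]
        intro hle
        have h1 := h2 (l[j]'(by omega)) (List.getElem_mem _)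
        have h2' := h2 (l[j+1]'(by omega)) (List.getElem_mem _)
        have := hsc j (by simpa using h) (by omega)
        omega
    · rintro ⟨l0, ⟨⟨hs, hpos, hsum⟩, hlen, hd, hsc⟩, rfl⟩
      refine ⟨⟨?_, ?_, ?_⟩, ?_, ?_, ?_, ?_⟩
      · exact List.Pairwise.map _ (fun a b h => by omega) hs
      · intro x hx
        simp only [List.mem_map] at hx
        obtain ⟨a, ha, rfl⟩ := hx; omega
      · rw [sum_map_add_one, hsum, hlen]
      · simp [hlen]
      · intro x hx
        simp only [List.mem_map] at hx
        obtain ⟨a, ha, rfl⟩ := hx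
        have := hpos a ha; omega
      · intro j h
        simp only [List.length_map] at h
        simp only [List.getElem_map]
        have := hd j (by simpa using h)
        omega
      · intro j h
        simp only [List.length_map] at h
        simp only [List.getElem_map]
        intro hle
        have := hsc j (by simpa using h) (by omega)
        omega
  rw [kr4, kr1, hset, Set.ncard_image_of_injective _ hinj]
end

section
/- Let kr_4(n,m) be the number of partitions of n into m parts with smallest part at least two, difference at least three at distance two, such that if two successive parts differ by at most one then their sum is ≡ 2 (mod 3). Then ∑_{n,m≥0} kr_4(n,m) q^n x^m = ∑_{n_1,n_2≥0} q^{3n_2² + 2n_2 + n_1² + n_1 + 3n_1 n_2} x^{2n_2 + n_1} / ((q;q)_{n_1} (q³;q³)_{n_2}). -/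
open Finset PowerSeries

/-!
Read from its smallest part, a KR4 partition is a sequence of blocks: pairs of successive parts
differing by at most one (their sum is then `≡ 2 (mod 3)`, so the pair is `halves (3 * v + 5)`)
and single parts. With `a` singles and `b` pairs the smallest such partition has size
`minSum a b`; subtracting from every block the gaps that the difference conditions force below
it turns the partition into a pair `(ms, vs)` of sorted lists of lengths `a` and `b`, of size
`minSum a b + Σ ms + 3 Σ vs`, and `assemble`, `decompose` are mutually inverse between the two.
A sorted list is the list of partial sums of its successive differences, so sorted lists of
length `a` counted by their sum have generating function `1 / (q; q)_a`, and counted by three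
times their sum, `1 / (q³; q³)_a`.
-/

namespace KR4

lemma map_add_map_sub {k : ℕ} {l : List ℕ} (h : ∀ a ∈ l, k ≤ a) :
    (l.map (· - k)).map (· + k) = l := by
  rw [List.map_map]
  conv_rhs => rw [← List.map_id l]
  exact List.map_congr_left fun a ha => Nat.sub_add_cancel (h a ha)

lemma pairwise_map_sub {k : ℕ} {l : List ℕ} (h : l.Pairwise (· ≤ ·)) :
    (l.map (· - k)).Pairwise (· ≤ ·) :=
  List.pairwise_map.mpr (h.imp fun hab => Nat.sub_le_sub_right hab k)

lemma exists_mem_head?_le {l : List ℕ} (hl : l.Pairwise (· ≤ ·)) {b : ℕ} (hb : b ∈ l) :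
    ∃ a ∈ l.head?, a ≤ b :=
  ⟨_, List.head?_eq_some_head _, hl.rel_head hb⟩

lemma diffCond_two_cons {k x : ℕ} {l : List ℕ} :
    DiffCond k 2 (x :: l) ↔ (∀ z ∈ l.tail.head?, x + k ≤ z) ∧ DiffCond k 2 l := by
  constructor
  · intro h
    refine ⟨fun z hz => ?_, fun j hj => ?_⟩
    · match l, hz with
      | _ :: _ :: _, hz => simpa [← Option.mem_some_iff.mp hz] using h 0 (by simp)
    · have hj' := h (j + 1) (by simp; omega)
      simpa using hj'
  · rintro ⟨h0, h⟩ (_ | j) hj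
    · match l, hj with
      | _ :: _ :: _, _ => simpa using h0 _ rfl
    · simpa using h j (by simp at hj; omega)

lemma sumCond2_cons {r x : ℕ} {l : List ℕ} :
    SumCond2 r (x :: l) ↔ (∀ y ∈ l.head?, y ≤ x + 1 → (x + y) % 3 = r) ∧ SumCond2 r l := by
  constructor
  · intro h
    refine ⟨fun y hy => ?_, fun j hj => ?_⟩
    · match l, hy with
      | _ :: _, hy => simpa [← Option.mem_some_iff.mp hy] using h 0 (by simp)
    · have hj' := h (j + 1) (by simp; omega)
      simpa using hj'
  · rintro ⟨h0, h⟩ (_ | j) hj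
    · match l, hj with
      | _ :: _, _ => simpa using h0 _ rfl
    · simpa using h j (by simp at hj; omega)

def IsKR4 (l : List ℕ) : Prop :=
  l.Pairwise (· ≤ ·) ∧ (∀ x ∈ l, 2 ≤ x) ∧ DiffCond 3 2 l ∧ SumCond2 2 l

lemma isKR4_nil : IsKR4 [] := by
  simp [IsKR4, DiffCond, SumCond2]

lemma isKR4_cons {x : ℕ} {l : List ℕ} :
    IsKR4 (x :: l) ↔
      2 ≤ x ∧ (∀ y ∈ l.head?, x ≤ y ∧ (y ≤ x + 1 → (x + y) % 3 = 2)) ∧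
        (∀ z ∈ l.tail.head?, x + 3 ≤ z) ∧ IsKR4 l := by
  unfold IsKR4
  rw [List.pairwise_cons, diffCond_two_cons, sumCond2_cons]
  constructor
  · rintro ⟨⟨hx, hs⟩, h2, ⟨hd0, hd⟩, hc0, hc⟩
    exact ⟨h2 x (by simp), fun y hy => ⟨hx y (List.mem_of_mem_head? hy), hc0 y hy⟩,
      hd0, hs, fun a ha => h2 a (by simp [ha]), hd, hc⟩
  · rintro ⟨hx2, hy, hz, hs, h2, hd, hc⟩
    refine ⟨⟨fun b hb => ?_, hs⟩, ?_, ⟨hz, hd⟩, fun y hy' => (hy y hy').2, hc⟩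
    · match l, hb with
      | a :: t, hb =>
        have hxa : x ≤ a := (hy a rfl).1
        rcases List.mem_cons.mp hb with rfl | h
        · exact hxa
        · exact hxa.trans (List.rel_of_pairwise_cons hs h)
    · simpa [List.forall_mem_cons] using ⟨hx2, h2⟩

lemma isKR4_cons_of_le {x : ℕ} {l : List ℕ} (hx : 2 ≤ x) (h1 : ∀ y ∈ l.head?, x + 2 ≤ y)
    (h2 : ∀ z ∈ l.tail.head?, x + 3 ≤ z) (hl : IsKR4 l) : IsKR4 (x :: l) :=
  isKR4_cons.mpr ⟨hx, fun y hy => have := h1 y hy; ⟨by omega, by omega⟩, h2, hl⟩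

lemma kr4_conditions_iff {n m : ℕ} {l : List ℕ} :
    (IsPartitionOf n l ∧ l.length = m ∧ (∀ x ∈ l, 2 ≤ x) ∧ DiffCond 3 2 l ∧ SumCond2 2 l) ↔
      IsKR4 l ∧ l.sum = n ∧ l.length = m := by
  unfold IsPartitionOf IsKR4
  constructor
  · rintro ⟨⟨hs, -, hsum⟩, hlen, h2, hd, hc⟩
    exact ⟨⟨hs, h2, hd, hc⟩, hsum, hlen⟩
  · rintro ⟨⟨hs, h2, hd, hc⟩, hsum, hlen⟩
    exact ⟨⟨hs, fun x hx => by have := h2 x hx; omega, hsum⟩, hlen, h2, hd, hc⟩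

def minSum (a b : ℕ) : ℕ := 3 * b ^ 2 + 2 * b + a ^ 2 + a + 3 * a * b

def halves (s : ℕ) : List ℕ := [s / 2, s - s / 2]

@[simp] lemma length_halves (s : ℕ) : (halves s).length = 2 := rfl

@[simp] lemma sum_halves (s : ℕ) : (halves s).sum = s := by simp [halves]; omega

-- The next block is the single `m + 2` if it lies below the first part of the pair
-- `halves (3 * v + 5)`, and that pair otherwise; the blocks still to come are raised by the gaps
-- it forces: singles by `2` and the `v`s by `1` after a single, by `3` and `2` after a pair.
def assemble : List ℕ → List ℕ → List ℕ
  | [], [] => []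
  | m :: ms, [] => (m + 2) :: assemble (ms.map (· + 2)) []
  | [], v :: vs => halves (3 * v + 5) ++ assemble [] (vs.map (· + 2))
  | m :: ms, v :: vs =>
      if 2 * m + 1 ≤ 3 * v then
        (m + 2) :: assemble (ms.map (· + 2)) ((v :: vs).map (· + 1))
      else
        halves (3 * v + 5) ++ assemble ((m :: ms).map (· + 3)) (vs.map (· + 2))
  termination_by ms vs => ms.length + vs.length

lemma assemble_single {m : ℕ} {ms vs : List ℕ} (h : ∀ v ∈ vs.head?, 2 * m + 1 ≤ 3 * v) :
    assemble (m :: ms) vs = (m + 2) :: assemble (ms.map (· + 2)) (vs.map (· + 1)) := by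
  rcases vs with _ | ⟨v, vs⟩
  · simp [assemble]
  · simp [assemble, h v rfl]

lemma assemble_pair {v : ℕ} {ms vs : List ℕ} (h : ∀ m ∈ ms.head?, 3 * v < 2 * m + 1) :
    assemble ms (v :: vs) = halves (3 * v + 5) ++ assemble (ms.map (· + 3)) (vs.map (· + 2)) := by
  rcases ms with _ | ⟨m, ms⟩
  · simp [assemble]
  · simp [assemble, show ¬ 2 * m + 1 ≤ 3 * v by have := h m rfl; omega]

theorem assemble_induction (motive : List ℕ → List ℕ → Prop) (nil : motive [] [])
    (single : ∀ m ms vs, (∀ v ∈ vs.head?, 2 * m + 1 ≤ 3 * v) →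
      motive (ms.map (· + 2)) (vs.map (· + 1)) → motive (m :: ms) vs)
    (pair : ∀ ms v vs, (∀ m ∈ ms.head?, 3 * v < 2 * m + 1) →
      motive (ms.map (· + 3)) (vs.map (· + 2)) → motive ms (v :: vs)) :
    ∀ ms vs, motive ms vs := by
  intro ms vs
  induction hn : ms.length + vs.length using Nat.strong_induction_on generalizing ms vs with
  | _ n ih =>
    match ms, vs with
    | [], [] => exact nil
    | m :: ms, [] => exact single m ms [] (by simp) (ih _ (by simp at hn ⊢; omega) _ _ rfl)
    | [], v :: vs => exact pair [] v vs (by simp) (ih _ (by simp at hn ⊢; omega) _ _ rfl)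
    | m :: ms, v :: vs =>
      by_cases h : 2 * m + 1 ≤ 3 * v
      · exact single m ms (v :: vs) (by simpa using h) (ih _ (by simp at hn ⊢; omega) _ _ rfl)
      · exact pair (m :: ms) v vs (by simp; omega) (ih _ (by simp at hn ⊢; omega) _ _ rfl)

lemma length_assemble : ∀ ms vs : List ℕ,
    (assemble ms vs).length = ms.length + 2 * vs.length := by
  refine assemble_induction _ (by simp [assemble]) ?_ ?_
  · intro m ms vs h ih
    simp [assemble_single h, ih]; ring
  · intro ms v vs h ih
    simp [assemble_pair h, ih]; ring

lemma sum_assemble : ∀ ms vs : List ℕ,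
    (assemble ms vs).sum = minSum ms.length vs.length + ms.sum + 3 * vs.sum := by
  refine assemble_induction _ (by simp [assemble, minSum]) ?_ ?_
  · intro m ms vs h ih
    simp [assemble_single h, ih, minSum]; ring
  · intro ms v vs h ih
    simp [assemble_pair h, ih, minSum]; ring

lemma nil_or_single_or_pair (ms vs : List ℕ) :
    (ms = [] ∧ vs = []) ∨
      (∃ m ms', ms = m :: ms' ∧ ∀ v ∈ vs.head?, 2 * m + 1 ≤ 3 * v) ∨
        ∃ v vs', vs = v :: vs' ∧ ∀ m ∈ ms.head?, 3 * v < 2 * m + 1 := by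
  rcases ms with _ | ⟨m, ms⟩ <;> rcases vs with _ | ⟨v, vs⟩ <;> simp
  omega

section Bounds

variable {ms vs : List ℕ}

lemma head_assemble_ge {c e : ℕ} (hms : ∀ m ∈ ms, c ≤ m) (hvs : ∀ v ∈ vs, e ≤ 3 * v) :
    ∀ y ∈ (assemble ms vs).head?, min (c + 2) ((e + 5) / 2) ≤ y := by
  intro y hy
  rcases nil_or_single_or_pair ms vs with ⟨rfl, rfl⟩ | ⟨m, ms, rfl, h⟩ | ⟨v, vs, rfl, h⟩
  · simp [assemble] at hy
  · simp [assemble_single h] at hy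
    have := hms m (by simp)
    omega
  · simp [assemble_pair h, halves] at hy
    have := hvs v (by simp)
    omega

lemma head_tail_assemble_ge {c e : ℕ} (hms : ∀ m ∈ ms, c ≤ m) (hvs : ∀ v ∈ vs, e ≤ 3 * v) :
    ∀ z ∈ (assemble ms vs).tail.head?, min (c + 4) ((e + 6) / 2) ≤ z := by
  intro z hz
  rcases nil_or_single_or_pair ms vs with ⟨rfl, rfl⟩ | ⟨m, ms, rfl, h⟩ | ⟨v, vs, rfl, h⟩
  · simp [assemble] at hz
  · rw [assemble_single h, List.tail_cons] at hz
    have := head_assemble_ge (c := c + 2) (e := e + 3)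
      (by simpa using fun m hm => hms m (by simp [hm]))
      (by simpa using fun v hv => by have := hvs v hv; omega) z hz
    omega
  · simp [assemble_pair h, halves] at hz
    have := hvs v (by simp)
    omega

lemma head_assemble_le_left :
    ∀ m ∈ ms.head?, ∃ y ∈ (assemble ms vs).head?, y ≤ m + 2 := by
  intro m' hm'
  rcases nil_or_single_or_pair ms vs with ⟨rfl, rfl⟩ | ⟨m, ms, rfl, h⟩ | ⟨v, vs, rfl, h⟩
  · simp at hm'
  · simp [assemble_single h] at hm' ⊢
    omega
  · have := h m' hm'
    simp [assemble_pair h, halves]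
    omega

lemma head_assemble_le_right :
    ∀ v ∈ vs.head?, ∃ y ∈ (assemble ms vs).head?, 2 * y ≤ 3 * v + 5 := by
  intro v' hv'
  rcases nil_or_single_or_pair ms vs with ⟨rfl, rfl⟩ | ⟨m, ms, rfl, h⟩ | ⟨v, vs, rfl, h⟩
  · simp at hv'
  · have := h v' hv'
    simp [assemble_single h]
    omega
  · simp only [List.head?_cons, Option.mem_some_iff] at hv'
    subst hv'
    simp [assemble_pair h, halves]
    omega

lemma head_add_head_tail_assemble_le : ∀ v ∈ vs.head?,
    ∃ y ∈ (assemble ms vs).head?, ∃ z ∈ (assemble ms vs).tail.head?, y + z ≤ 3 * v + 5 := by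
  intro v' hv'
  rcases nil_or_single_or_pair ms vs with ⟨rfl, rfl⟩ | ⟨m, ms, rfl, h⟩ | ⟨v, vs, rfl, h⟩
  · simp at hv'
  · rcases vs with _ | ⟨v, vs⟩
    · simp at hv'
    obtain ⟨z, hz, hle⟩ :=
      head_assemble_le_right (ms := ms.map (· + 2)) (vs := (v :: vs).map (· + 1)) (v + 1) rfl
    have := h v rfl
    simp only [List.head?_cons, Option.mem_some_iff] at hv'
    exact ⟨m + 2, by simp [assemble_single h], z, by simpa [assemble_single h] using hz,
      by omega⟩
  · simp only [List.head?_cons, Option.mem_some_iff] at hv'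
    subst hv'
    simp [assemble_pair h, halves]
    omega

lemma bounds_after_single {m : ℕ} (hms : ∀ m' ∈ ms, m ≤ m')
    (hvs : vs.Pairwise (· ≤ ·)) (h : ∀ v ∈ vs.head?, 2 * m + 1 ≤ 3 * v) :
    (∀ y ∈ (assemble (ms.map (· + 2)) (vs.map (· + 1))).head?, m + 4 ≤ y) ∧
      ∀ z ∈ (assemble (ms.map (· + 2)) (vs.map (· + 1))).tail.head?, m + 5 ≤ z := by
  have hm : ∀ m' ∈ ms.map (· + 2), m + 2 ≤ m' := by
    rw [List.forall_mem_map]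
    intro m' hm'
    have := hms m' hm'
    omega
  have hv : ∀ v' ∈ vs.map (· + 1), 2 * m + 4 ≤ 3 * v' := by
    rw [List.forall_mem_map]
    intro v hv
    obtain ⟨v₀, hv₀, hle⟩ := exists_mem_head?_le hvs hv
    have := h v₀ hv₀
    omega
  exact ⟨fun y hy => by have := head_assemble_ge hm hv y hy; omega,
    fun z hz => by have := head_tail_assemble_ge hm hv z hz; omega⟩

lemma bounds_after_pair {v : ℕ} (hms : ms.Pairwise (· ≤ ·))
    (hvs : ∀ v' ∈ vs, v ≤ v') (h : ∀ m ∈ ms.head?, 3 * v < 2 * m + 1) :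
    (∀ y ∈ (assemble (ms.map (· + 3)) (vs.map (· + 2))).head?, (3 * v + 5) / 2 + 3 ≤ y) ∧
      ∀ z ∈ (assemble (ms.map (· + 3)) (vs.map (· + 2))).tail.head?, (3 * v + 6) / 2 + 3 ≤ z := by
  have hm : ∀ m' ∈ ms.map (· + 3), (3 * v + 7) / 2 ≤ m' := by
    rw [List.forall_mem_map]
    intro m hm
    obtain ⟨m₀, hm₀, hle⟩ := exists_mem_head?_le hms hm
    have := h m₀ hm₀
    omega
  have hv : ∀ v' ∈ vs.map (· + 2), 3 * v + 6 ≤ 3 * v' := by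
    rw [List.forall_mem_map]
    intro v' hv'
    have := hvs v' hv'
    omega
  exact ⟨fun y hy => by have := head_assemble_ge hm hv y hy; omega,
    fun z hz => by have := head_tail_assemble_ge hm hv z hz; omega⟩

end Bounds

lemma isKR4_halves_append {v : ℕ} {l : List ℕ} (hl : IsKR4 l)
    (h1 : ∀ y ∈ l.head?, (3 * v + 5) / 2 + 3 ≤ y)
    (h2 : ∀ z ∈ l.tail.head?, (3 * v + 6) / 2 + 3 ≤ z) : IsKR4 (halves (3 * v + 5) ++ l) := by
  show IsKR4 ((3 * v + 5) / 2 :: (3 * v + 5 - (3 * v + 5) / 2) :: l)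
  refine isKR4_cons.mpr ⟨by omega, ?_, h1, isKR4_cons_of_le (by omega) ?_ ?_ hl⟩
  · simp only [List.head?_cons, Option.mem_some_iff, forall_eq']
    omega
  · intro y hy; have := h1 y hy; omega
  · intro z hz; have := h2 z hz; omega

theorem isKR4_assemble : ∀ ms vs : List ℕ, ms.Pairwise (· ≤ ·) → vs.Pairwise (· ≤ ·) →
    IsKR4 (assemble ms vs) := by
  refine assemble_induction _ (fun _ _ => by simpa [assemble] using isKR4_nil) ?_ ?_
  · intro m ms vs h ih hms hvs
    obtain ⟨hm, hms⟩ := List.pairwise_cons.mp hms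
    obtain ⟨h1, h2⟩ := bounds_after_single hm hvs h
    rw [assemble_single h]
    exact isKR4_cons_of_le (by omega) (fun y hy => by have := h1 y hy; omega)
      (fun z hz => by have := h2 z hz; omega)
      (ih (by simpa [List.pairwise_map] using hms) (by simpa [List.pairwise_map] using hvs))
  · intro ms v vs h ih hms hvs
    obtain ⟨hv, hvs⟩ := List.pairwise_cons.mp hvs
    obtain ⟨h1, h2⟩ := bounds_after_pair hms hv h
    rw [assemble_pair h]
    exact isKR4_halves_append
      (ih (by simpa [List.pairwise_map] using hms) (by simpa [List.pairwise_map] using hvs)) h1 h2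

def decompose : List ℕ → List ℕ × List ℕ
  | [] => ([], [])
  | [x] => ([x - 2], [])
  | x :: y :: t =>
      if y ≤ x + 1 then
        ((decompose t).1.map (· - 3), (x + y - 5) / 3 :: (decompose t).2.map (· - 2))
      else
        ((x - 2) :: (decompose (y :: t)).1.map (· - 2), (decompose (y :: t)).2.map (· - 1))

lemma decompose_cons_of_add_two_le {x : ℕ} {l : List ℕ} (h : ∀ y ∈ l.head?, x + 2 ≤ y) :
    decompose (x :: l) = ((x - 2) :: (decompose l).1.map (· - 2), (decompose l).2.map (· - 1)) := by
  rcases l with _ | ⟨y, t⟩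
  · simp [decompose]
  · simp [decompose, show ¬ y ≤ x + 1 by have := h y rfl; omega]

lemma decompose_halves_append (v : ℕ) (l : List ℕ) :
    decompose (halves (3 * v + 5) ++ l) =
      ((decompose l).1.map (· - 3), v :: (decompose l).2.map (· - 2)) := by
  simp only [halves, List.cons_append, List.nil_append, decompose,
    if_pos (by omega : 3 * v + 5 - (3 * v + 5) / 2 ≤ (3 * v + 5) / 2 + 1)]
  congr
  omega

theorem decompose_assemble : ∀ ms vs : List ℕ, ms.Pairwise (· ≤ ·) → vs.Pairwise (· ≤ ·) →
    decompose (assemble ms vs) = (ms, vs) := by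
  refine assemble_induction _ (fun _ _ => by simp [assemble, decompose]) ?_ ?_
  · intro m ms vs h ih hms hvs
    obtain ⟨hm, hms⟩ := List.pairwise_cons.mp hms
    rw [assemble_single h, decompose_cons_of_add_two_le
      (fun y hy => by have := (bounds_after_single hm hvs h).1 y hy; omega),
      ih (by simpa [List.pairwise_map] using hms) (by simpa [List.pairwise_map] using hvs)]
    simp [Function.comp_def]
  · intro ms v vs h ih hms hvs
    rw [assemble_pair h, decompose_halves_append,
      ih (by simpa [List.pairwise_map] using hms)
        (by simpa [List.pairwise_map] using (List.pairwise_cons.mp hvs).2)]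
    simp [Function.comp_def]

lemma assemble_injOn : Set.InjOn (fun x : List ℕ × List ℕ => assemble x.1 x.2)
    {x | x.1.Pairwise (· ≤ ·) ∧ x.2.Pairwise (· ≤ ·)} := by
  rintro ⟨ms, vs⟩ ⟨hms, hvs⟩ ⟨ms', vs'⟩ ⟨hms', hvs'⟩ h
  rw [← decompose_assemble ms vs hms hvs, ← decompose_assemble ms' vs' hms' hvs']
  exact congrArg decompose h

lemma assemble_decompose_single {x : ℕ} {A B : List ℕ} (hA : A.Pairwise (· ≤ ·))
    (hB : B.Pairwise (· ≤ ·)) (hl : IsKR4 (x :: assemble A B))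
    (hfar : ∀ y ∈ (assemble A B).head?, x + 2 ≤ y) :
    ((x - 2) :: A.map (· - 2)).Pairwise (· ≤ ·) ∧
      assemble ((x - 2) :: A.map (· - 2)) (B.map (· - 1)) = x :: assemble A B := by
  obtain ⟨hx, -, hxt, -⟩ := isKR4_cons.mp hl
  have hA' : ∀ a ∈ A, x ≤ a := by
    intro a ha
    obtain ⟨a₀, ha₀, hle⟩ := exists_mem_head?_le hA ha
    obtain ⟨t₀, ht₀, hle'⟩ := head_assemble_le_left a₀ ha₀ (vs := B)
    have := hfar t₀ ht₀
    omega
  have hB' : ∀ b ∈ B, 2 * x ≤ 3 * b := by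
    intro b hb
    obtain ⟨b₀, hb₀, hle⟩ := exists_mem_head?_le hB hb
    obtain ⟨t₀, ht₀, t₁, ht₁, hle'⟩ := head_add_head_tail_assemble_le b₀ hb₀ (ms := A)
    have := hfar t₀ ht₀
    have := hxt t₁ ht₁
    omega
  refine ⟨List.pairwise_cons.mpr ⟨?_, pairwise_map_sub hA⟩, ?_⟩
  · rw [List.forall_mem_map]
    intro a ha
    have := hA' a ha
    omega
  · have hsingle : ∀ v ∈ (B.map (· - 1)).head?, 2 * (x - 2) + 1 ≤ 3 * v := by
      intro v hv
      obtain ⟨b, hb, rfl⟩ : ∃ b ∈ B.head?, b - 1 = v := by simpa using hv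
      have := hB' b (List.mem_of_mem_head? hb)
      omega
    rw [assemble_single hsingle, map_add_map_sub (fun a ha => by have := hA' a ha; omega),
      map_add_map_sub (fun b hb => by have := hB' b hb; omega), Nat.sub_add_cancel hx]

lemma assemble_decompose_pair {x y : ℕ} {A B : List ℕ} (hA : A.Pairwise (· ≤ ·))
    (hB : B.Pairwise (· ≤ ·)) (hl : IsKR4 (x :: y :: assemble A B)) (hclose : y ≤ x + 1) :
    ((x + y - 5) / 3 :: B.map (· - 2)).Pairwise (· ≤ ·) ∧
      assemble (A.map (· - 3)) ((x + y - 5) / 3 :: B.map (· - 2)) = x :: y :: assemble A B := by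
  obtain ⟨hx, hxy, hxt, hyl⟩ := isKR4_cons.mp hl
  obtain ⟨-, hyt, hyt', -⟩ := isKR4_cons.mp hyl
  simp only [List.head?_cons, List.tail_cons, Option.mem_some_iff, forall_eq'] at hxy hxt
  have hsum := hxy.2 hclose
  have hA' : ∀ a ∈ A, x + y < 2 * a := by
    intro a ha
    obtain ⟨a₀, ha₀, hle⟩ := exists_mem_head?_le hA ha
    obtain ⟨t₀, ht₀, hle'⟩ := head_assemble_le_left a₀ ha₀ (vs := B)
    have := hxt t₀ ht₀
    have := hyt t₀ ht₀
    omega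
  have hB' : ∀ b ∈ B, x + y + 1 ≤ 3 * b := by
    intro b hb
    obtain ⟨b₀, hb₀, hle⟩ := exists_mem_head?_le hB hb
    obtain ⟨t₀, ht₀, t₁, ht₁, hle'⟩ := head_add_head_tail_assemble_le b₀ hb₀ (ms := A)
    have := hxt t₀ ht₀
    have := hyt' t₁ ht₁
    omega
  refine ⟨List.pairwise_cons.mpr ⟨?_, pairwise_map_sub hB⟩, ?_⟩
  · rw [List.forall_mem_map]
    intro b hb
    have := hB' b hb
    omega
  · have hpair : ∀ a ∈ (A.map (· - 3)).head?, 3 * ((x + y - 5) / 3) < 2 * a + 1 := by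
      intro a hv
      obtain ⟨a', ha', rfl⟩ : ∃ a' ∈ A.head?, a' - 3 = a := by simpa using hv
      have := hA' a' (List.mem_of_mem_head? ha')
      omega
    rw [assemble_pair hpair, map_add_map_sub (fun a ha => by have := hA' a ha; omega),
      map_add_map_sub (fun b hb => by have := hB' b hb; omega)]
    simp only [halves, List.cons_append, List.nil_append, List.cons.injEq]
    exact ⟨by omega, by omega, trivial⟩

theorem assemble_decompose (l : List ℕ) (hl : IsKR4 l) :
    (decompose l).1.Pairwise (· ≤ ·) ∧ (decompose l).2.Pairwise (· ≤ ·) ∧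
      assemble (decompose l).1 (decompose l).2 = l := by
  induction l using decompose.induct with
  | case1 => simp [decompose, assemble]
  | case2 x =>
    have := (isKR4_cons.mp hl).1
    simp [decompose, assemble]
    omega
  | case3 x y t hclose ih =>
    obtain ⟨hA, hB, ht⟩ := ih (isKR4_cons.mp (isKR4_cons.mp hl).2.2.2).2.2.2
    rw [← ht] at hl
    obtain ⟨hB', h⟩ := assemble_decompose_pair hA hB hl hclose
    simp only [decompose, if_pos hclose]
    exact ⟨pairwise_map_sub hA, hB', h.trans (by rw [ht])⟩
  | case4 x y t hfar ih =>
    obtain ⟨hA, hB, ht⟩ := ih (isKR4_cons.mp hl).2.2.2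
    have hfar' : ∀ z ∈ (assemble (decompose (y :: t)).1 (decompose (y :: t)).2).head?,
        x + 2 ≤ z := by
      rw [ht]
      simp
      omega
    rw [← ht] at hl
    obtain ⟨hA', h⟩ := assemble_decompose_single hA hB hl hfar'
    simp only [decompose, if_neg hfar]
    exact ⟨hA', pairwise_map_sub hB, h.trans (by rw [ht])⟩

noncomputable def geomSeries (d : ℕ) : PowerSeries ℚ := mk fun n => if d ∣ n then 1 else 0

lemma geomSeries_mul_one_sub_X_pow {d : ℕ} (hd : d ≠ 0) : geomSeries d * (1 - X ^ d) = 1 := by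
  have hexpand : geomSeries d = expand d hd (mk 1) := by
    ext n
    simp [geomSeries, coeff_expand]
  rw [hexpand, ← expand_X d hd, ← map_one (expand d hd), ← map_sub, ← map_mul,
    mk_one_mul_one_sub_eq_one, map_one]

lemma inv_qq_mul_qcube (a b : ℕ) :
    (qq a * qcube b)⁻¹ =
      (∏ j ∈ range a, geomSeries (j + 1)) * ∏ j ∈ range b, geomSeries (3 * (j + 1)) := by
  refine (PowerSeries.inv_eq_iff_mul_eq_one ?_).mpr ?_
  · simp [qq, qcube, map_prod]
  · rw [qq, qcube, mul_mul_mul_comm, ← prod_mul_distrib, ← prod_mul_distrib]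
    simp [geomSeries_mul_one_sub_X_pow]

def weightedSolutions : List ℕ → ℕ → Finset (List ℕ)
  | [], k => if k = 0 then {[]} else ∅
  | d :: D, k => (range (k + 1)).biUnion
      fun j => if d ∣ j then (weightedSolutions D (k - j)).image (List.cons (j / d)) else ∅

lemma mem_weightedSolutions {D : List ℕ} (hD : ∀ d ∈ D, 0 < d) {k : ℕ} {e : List ℕ} :
    e ∈ weightedSolutions D k ↔ e.length = D.length ∧ (List.zipWith (· * ·) D e).sum = k := by
  induction D generalizing k e with
  | nil =>
    rcases e with _ | ⟨x, e⟩ <;> by_cases hk : k = 0 <;> simp [weightedSolutions, hk, eq_comm]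
  | cons d D ih =>
    have hd : 0 < d := hD d (by simp)
    have ih' := @ih (fun x hx => hD x (by simp [hx]))
    rcases e with _ | ⟨x, e⟩
    · simp only [weightedSolutions, mem_biUnion, mem_range, List.length_nil, List.length_cons]
      refine iff_of_false (fun ⟨j, _, hj⟩ => ?_) (by omega)
      split_ifs at hj <;> simp at hj
    simp only [weightedSolutions, mem_biUnion, mem_range, List.length_cons,
      List.zipWith_cons_cons, List.sum_cons, add_left_inj]
    constructor
    · rintro ⟨j, hj, hmem⟩
      split_ifs at hmem with hdj
      · obtain ⟨e', he', he⟩ := mem_image.mp hmem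
        obtain ⟨rfl, rfl⟩ := List.cons.inj he
        obtain ⟨hlen, hsum⟩ := ih'.mp he'
        refine ⟨hlen, ?_⟩
        rw [Nat.mul_div_cancel' hdj]
        omega
      · simp at hmem
    · rintro ⟨hlen, hsum⟩
      refine ⟨d * x, by omega, ?_⟩
      rw [if_pos (dvd_mul_right d x), Nat.mul_div_cancel_left x hd]
      exact mem_image_of_mem _ (ih'.mpr ⟨hlen, by omega⟩)

lemma card_weightedSolutions (D : List ℕ) (k : ℕ) :
    (#(weightedSolutions D k) : ℚ) = coeff k (D.map geomSeries).prod := by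
  induction D generalizing k with
  | nil => by_cases hk : k = 0 <;> simp [weightedSolutions, hk]
  | cons d D ih =>
    rw [List.map_cons, List.prod_cons, coeff_mul, Nat.sum_antidiagonal_eq_sum_range_succ_mk,
      weightedSolutions, card_biUnion]
    · push_cast
      refine sum_congr rfl fun j _ => ?_
      by_cases hdj : d ∣ j
      · rw [if_pos hdj, card_image_of_injective _ List.cons_injective, ih]
        simp [geomSeries, hdj]
      · simp [geomSeries, hdj]
    · intro j₁ _ j₂ _ hne
      simp only [Function.onFun]
      split_ifs with h₁ h₂
      · refine disjoint_left.mpr fun e he₁ he₂ => hne ?_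
        obtain ⟨e₁, -, rfl⟩ := mem_image.mp he₁
        obtain ⟨e₂, -, he⟩ := mem_image.mp he₂
        rw [← Nat.mul_div_cancel' h₁, ← Nat.mul_div_cancel' h₂, (List.cons.inj he).1]
      all_goals simp

def weights : ℕ → List ℕ
  | 0 => []
  | a + 1 => (a + 1) :: weights a

def partialSums : List ℕ → List ℕ
  | [] => []
  | d :: ds => d :: (partialSums ds).map (· + d)

def differences : List ℕ → List ℕ
  | [] => []
  | x :: xs => x :: differences (xs.map (· - x))
  termination_by l => l.length

@[simp] lemma length_weights (a : ℕ) : (weights a).length = a := by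
  induction a <;> simp [weights, *]

lemma weights_pos {a d : ℕ} (hd : d ∈ weights a) : 0 < d := by
  induction a with
  | zero => simp [weights] at hd
  | succ a ih => rcases List.mem_cons.mp hd with rfl | hd; exacts [a.succ_pos, ih hd]

lemma prod_map_geomSeries_weights (c a : ℕ) :
    (((weights a).map (c * ·)).map geomSeries).prod = ∏ j ∈ range a, geomSeries (c * (j + 1)) := by
  induction a with
  | zero => simp [weights]
  | succ a ih => rw [prod_range_succ, ← ih, mul_comm]; simp [weights]

@[simp] lemma length_partialSums (ds : List ℕ) : (partialSums ds).length = ds.length := by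
  induction ds <;> simp [partialSums, *]

@[simp] lemma length_differences (l : List ℕ) : (differences l).length = l.length := by
  induction l using differences.induct with
  | case1 => simp [differences]
  | case2 x xs ih => simpa [differences] using ih

lemma sum_partialSums (ds : List ℕ) :
    (partialSums ds).sum = (List.zipWith (· * ·) (weights ds.length) ds).sum := by
  induction ds with
  | nil => simp [partialSums, weights]
  | cons d ds ih => simp [partialSums, weights, ih]; ring

lemma pairwise_partialSums (ds : List ℕ) : (partialSums ds).Pairwise (· ≤ ·) := by
  induction ds with
  | nil => simp [partialSums]
  | cons d ds ih => simpa [partialSums, List.pairwise_map] using ih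

lemma differences_partialSums (ds : List ℕ) : differences (partialSums ds) = ds := by
  induction ds with
  | nil => simp [partialSums, differences]
  | cons d ds ih => simp [partialSums, differences, Function.comp_def, ih]

lemma partialSums_differences {l : List ℕ} (hl : l.Pairwise (· ≤ ·)) :
    partialSums (differences l) = l := by
  induction l using differences.induct with
  | case1 => simp [partialSums, differences]
  | case2 x xs ih =>
    obtain ⟨hx, hxs⟩ := List.pairwise_cons.mp hl
    have ih' : (xs.map (· - x)).Pairwise (· ≤ ·) →
        partialSums (differences (xs.map (· - x))) = xs.map (· - x) := by
      simpa using ih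
    rw [differences, partialSums, ih' (pairwise_map_sub hxs), map_add_map_sub hx]

lemma sum_zipWith_map_mul (c : ℕ) (l e : List ℕ) :
    (List.zipWith (· * ·) (l.map (c * ·)) e).sum = c * (List.zipWith (· * ·) l e).sum := by
  induction l generalizing e with
  | nil => simp
  | cons d l ih => rcases e with _ | ⟨x, e⟩ <;> simp [ih]; ring

def pairWeights (a b : ℕ) : List ℕ := weights a ++ (weights b).map (3 * ·)

lemma sum_zipWith_pairWeights {a b : ℕ} {e : List ℕ} (he : e.length = a + b) :
    (List.zipWith (· * ·) (pairWeights a b) e).sum =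
      (partialSums (e.take a)).sum + 3 * (partialSums (e.drop a)).sum := by
  conv_lhs => rw [← List.take_append_drop a e]
  rw [pairWeights, List.zipWith_append (by simp; omega), List.sum_append, sum_zipWith_map_mul,
    sum_partialSums, sum_partialSums]
  simp [he]

def sortedPairs (a b s : ℕ) : Finset (List ℕ × List ℕ) :=
  (weightedSolutions (pairWeights a b) s).image
    fun e => (partialSums (e.take a), partialSums (e.drop a))

lemma mem_sortedPairs {a b s : ℕ} {ms vs : List ℕ} :
    (ms, vs) ∈ sortedPairs a b s ↔ ms.Pairwise (· ≤ ·) ∧ vs.Pairwise (· ≤ ·) ∧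
      ms.length = a ∧ vs.length = b ∧ ms.sum + 3 * vs.sum = s := by
  have hpos : ∀ d ∈ pairWeights a b, 0 < d := by
    simp only [pairWeights, List.mem_append, List.mem_map]
    rintro d (hd | ⟨w, hw, rfl⟩)
    · exact weights_pos hd
    · have := weights_pos hw; omega
  simp only [sortedPairs, mem_image, mem_weightedSolutions hpos, Prod.mk.injEq]
  constructor
  · rintro ⟨e, ⟨hlen, hsum⟩, rfl, rfl⟩
    simp only [pairWeights, List.length_append, List.length_map, length_weights] at hlen
    refine ⟨pairwise_partialSums _, pairwise_partialSums _, by simp [hlen], by simp [hlen], ?_⟩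
    rw [← hsum, sum_zipWith_pairWeights hlen]
  · rintro ⟨hms, hvs, rfl, rfl, hsum⟩
    have htake : (differences ms ++ differences vs).take ms.length = differences ms := by simp
    have hdrop : (differences ms ++ differences vs).drop ms.length = differences vs := by simp
    refine ⟨differences ms ++ differences vs, ⟨by simp [pairWeights], ?_⟩, ?_, ?_⟩
    · rw [sum_zipWith_pairWeights (by simp), htake, hdrop, partialSums_differences hms,
        partialSums_differences hvs, hsum]
    · rw [htake, partialSums_differences hms]
    · rw [hdrop, partialSums_differences hvs]

lemma card_sortedPairs (a b s : ℕ) : (#(sortedPairs a b s) : ℚ) = coeff s (qq a * qcube b)⁻¹ := by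
  have hinj : Function.Injective
      fun e : List ℕ => (partialSums (e.take a), partialSums (e.drop a)) := by
    intro e₁ e₂ he
    simp only [Prod.mk.injEq] at he
    rw [← List.take_append_drop a e₁, ← List.take_append_drop a e₂,
      ← differences_partialSums (e₁.take a), ← differences_partialSums (e₁.drop a), he.1, he.2,
      differences_partialSums, differences_partialSums]
  rw [sortedPairs, card_image_of_injective _ hinj, card_weightedSolutions, inv_qq_mul_qcube,
    pairWeights, List.map_append, List.prod_append, ← prod_map_geomSeries_weights 3]
  have hone := prod_map_geomSeries_weights 1 a
  simp only [one_mul, List.map_id'] at hone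
  rw [hone]

def sortedPairsOfSum (n : ℕ) (p : ℕ × ℕ) : Finset (List ℕ × List ℕ) :=
  if minSum p.1 p.2 ≤ n then sortedPairs p.1 p.2 (n - minSum p.1 p.2) else ∅

lemma mem_sortedPairsOfSum {n : ℕ} {p : ℕ × ℕ} {x : List ℕ × List ℕ} :
    x ∈ sortedPairsOfSum n p ↔ x.1.Pairwise (· ≤ ·) ∧ x.2.Pairwise (· ≤ ·) ∧
      x.1.length = p.1 ∧ x.2.length = p.2 ∧ (assemble x.1 x.2).sum = n := by
  rw [sortedPairsOfSum, sum_assemble]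
  split_ifs with h
  · rw [mem_sortedPairs]
    constructor
    · rintro ⟨hms, hvs, h₁, h₂, hsum⟩
      refine ⟨hms, hvs, h₁, h₂, ?_⟩
      rw [h₁, h₂]
      omega
    · rintro ⟨hms, hvs, h₁, h₂, hsum⟩
      rw [h₁, h₂] at hsum
      exact ⟨hms, hvs, h₁, h₂, by omega⟩
  · simp only [notMem_empty, false_iff]
    rintro ⟨-, -, h₁, h₂, hsum⟩
    rw [h₁, h₂] at hsum
    omega

lemma coeff_eq_card_sortedPairsOfSum (n a b : ℕ) :
    coeff n ((X : PowerSeries ℚ) ^ minSum a b * (qq a * qcube b)⁻¹) =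
      #(sortedPairsOfSum n (a, b)) := by
  rw [coeff_X_pow_mul', sortedPairsOfSum]
  split_ifs
  · exact (card_sortedPairs a b _).symm
  · simp

def lengthPairs (m : ℕ) : Finset (ℕ × ℕ) :=
  (range (m + 1) ×ˢ range (m + 1)).filter fun p => p.1 + 2 * p.2 = m

lemma setOf_kr4_eq_biUnion (n m : ℕ) :
    {l : List ℕ |
      IsPartitionOf n l ∧ l.length = m ∧ (∀ x ∈ l, 2 ≤ x) ∧ DiffCond 3 2 l ∧ SumCond2 2 l} =
      ↑((lengthPairs m).biUnion fun p =>
        (sortedPairsOfSum n p).image fun x => assemble x.1 x.2) := by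
  ext l
  simp only [Set.mem_ofPred_eq, kr4_conditions_iff, coe_biUnion, coe_image, Set.mem_iUnion,
    Set.mem_image, mem_coe, mem_sortedPairsOfSum, lengthPairs, mem_filter, mem_product, mem_range]
  constructor
  · rintro ⟨hl, hsum, hlen⟩
    obtain ⟨hA, hB, hAB⟩ := assemble_decompose l hl
    have := length_assemble (decompose l).1 (decompose l).2
    rw [hAB] at this
    refine ⟨((decompose l).1.length, (decompose l).2.length), ⟨⟨?_, ?_⟩, ?_⟩,
      decompose l, ⟨hA, hB, rfl, rfl, by rw [hAB, hsum]⟩, hAB⟩ <;> omega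
  · rintro ⟨p, ⟨-, hp⟩, x, ⟨hA, hB, h1, h2, hsum⟩, rfl⟩
    exact ⟨isKR4_assemble _ _ hA hB, hsum, by rw [length_assemble, h1, h2, hp]⟩

lemma kr4_eq_sum_card (n m : ℕ) : kr4 n m = ∑ p ∈ lengthPairs m, #(sortedPairsOfSum n p) := by
  rw [kr4, setOf_kr4_eq_biUnion, Set.ncard_coe_finset, card_biUnion]
  · refine sum_congr rfl fun p _ => card_image_of_injOn fun x hx y hy => assemble_injOn ?_ ?_
    · exact (mem_sortedPairsOfSum.mp hx).imp_right And.left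
    · exact (mem_sortedPairsOfSum.mp hy).imp_right And.left
  · intro p _ q _ hne
    refine disjoint_left.mpr fun l hp hq => hne ?_
    obtain ⟨x, hx, rfl⟩ := mem_image.mp hp
    obtain ⟨y, hy, hxy⟩ := mem_image.mp hq
    obtain ⟨hx₁, hx₂, hx₃, hx₄, -⟩ := mem_sortedPairsOfSum.mp hx
    obtain ⟨hy₁, hy₂, hy₃, hy₄, -⟩ := mem_sortedPairsOfSum.mp hy
    obtain rfl := assemble_injOn ⟨hy₁, hy₂⟩ ⟨hx₁, hx₂⟩ hxy
    exact Prod.ext (hx₃.symm.trans hy₃) (hx₄.symm.trans hy₄)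

end KR4

/-- Theorem 3.4: the generating function for `kr₄`, coefficient of `q^n x^m`. -/
theorem kr4_generating_function (n m : ℕ) :
    (kr4 n m : ℚ) =
      ∑ p ∈ (Finset.range (m + 1) ×ˢ Finset.range (m + 1)).filter
          (fun p => p.1 + 2 * p.2 = m),
        PowerSeries.coeff n
          ((X : PowerSeries ℚ) ^ (3 * p.2 ^ 2 + 2 * p.2 + p.1 ^ 2 + p.1 + 3 * p.1 * p.2) * (qq p.1 * qcube p.2)⁻¹) := by
  rw [KR4.kr4_eq_sum_card, Nat.cast_sum]
  exact sum_congr rfl fun p _ => (KR4.coeff_eq_card_sortedPairsOfSum n p.1 p.2).symm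
end

section
/- Let kr^b_1(n,m) count partitions of n into m parts with difference at least three at distance two such that if two successive parts differ by at most one, their sum is ≡ 1 (mod 3). Then ∑_{n,m≥0} kr^b_1(n,m) q^n x^m = ∑_{n_1,n_2≥0} q^{3n_2² + n_2 + n_1² + 3n_1 n_2} x^{2n_2 + n_1} / ((q;q)_{n_1} (q³;q³)_{n_2}). -/
/-!
Read from its smallest part, a partition counted by `krb1` splits uniquely into singletons and
pairs of successive parts differing by at most one. When `a` singletons and `b` pairs come before
a block, a singleton equals `μ + 1 + 2a + 3b` and a pair has sum `4 + 3 (D + a + 2b)`, with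
`μ, D ≥ 0`. Conversely, any nondecreasing excess sequences `μ` (one entry per singleton) and `D`
(one per pair) give back exactly one such partition, obtained by always placing the smaller of
the next singleton and the next pair. The configuration with zero excesses has weight
`3n₂² + n₂ + n₁² + 3n₁n₂`, and `1 / (q^r; q^r)_k` generates nondecreasing sequences of `k`
naturals weighted by `r` times their sum, since removing a leading `0` or lowering every entry by
one gives the recursion `(1 - q^(r(k+1))) F_(k+1) = F_k`.
-/

open Finset PowerSeries

/-- `kr₁ᵇ n m`: partitions of `n` into `m` parts with difference at least three at
distance two such that close successive sums are ≡ 1 (mod 3). -/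
noncomputable def krb1 (n m : ℕ) : ℕ :=
  Set.ncard {l : List ℕ |
    IsPartitionOf n l ∧ l.length = m ∧ DiffCond 3 2 l ∧ SumCond2 1 l}

inductive Admissible : List ℕ → Prop
  | nil : Admissible []
  | cons {x : ℕ} {l : List ℕ} (pos : 1 ≤ x)
      (next : ∀ y ∈ l[0]?, x ≤ y ∧ (y ≤ x + 1 → (x + y) % 3 = 1))
      (skip : ∀ z ∈ l[1]?, x + 3 ≤ z) (tail : Admissible l) : Admissible (x :: l)

theorem diffCond_cons_iff {k d x : ℕ} {l : List ℕ} :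
    DiffCond k (d + 1) (x :: l) ↔ (∀ z ∈ l[d]?, x + k ≤ z) ∧ DiffCond k (d + 1) l := by
  constructor
  · intro h
    refine ⟨fun z hz => ?_, fun j hj => ?_⟩
    · obtain ⟨hd, rfl⟩ := List.getElem?_eq_some_iff.mp hz
      simpa using h 0 (by simpa using hd)
    · simpa [Nat.add_right_comm _ 1] using h (j + 1) (by simp; omega)
  · rintro ⟨h₀, h⟩ (_ | j) hj
    · simpa using h₀ _ (List.getElem?_eq_getElem (by simpa using hj))
    · simpa [Nat.add_right_comm _ 1] using h j (by simp at hj; omega)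

theorem sumCond2_cons_iff {r x : ℕ} {l : List ℕ} :
    SumCond2 r (x :: l) ↔ (∀ y ∈ l[0]?, y ≤ x + 1 → (x + y) % 3 = r) ∧ SumCond2 r l := by
  constructor
  · intro h
    refine ⟨fun y hy => ?_, fun j hj => h (j + 1) (by simp; omega)⟩
    obtain ⟨hd, rfl⟩ := List.getElem?_eq_some_iff.mp hy
    simpa using h 0 (by simpa using hd)
  · rintro ⟨h₀, h⟩ (_ | j) hj
    · simpa using h₀ _ (List.getElem?_eq_getElem (by simpa using hj))
    · exact h j (by simp at hj; omega)

theorem pairwise_le_cons_iff {x : ℕ} {l : List ℕ} :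
    (x :: l).Pairwise (· ≤ ·) ↔ (∀ y ∈ l[0]?, x ≤ y) ∧ l.Pairwise (· ≤ ·) := by
  rw [← List.isChain_iff_pairwise, ← List.isChain_iff_pairwise, List.isChain_cons]
  cases l <;> simp

theorem admissible_iff {l : List ℕ} :
    Admissible l ↔ l.Pairwise (· ≤ ·) ∧ (∀ x ∈ l, 0 < x) ∧ DiffCond 3 2 l ∧ SumCond2 1 l := by
  induction l with
  | nil => exact ⟨fun _ => ⟨.nil, by simp, fun j hj => by simp at hj, fun j hj => by simp at hj⟩,
      fun _ => .nil⟩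
  | cons x l ih =>
    simp only [pairwise_le_cons_iff, List.mem_cons, forall_eq_or_imp, diffCond_cons_iff,
      sumCond2_cons_iff]
    constructor
    · rintro (_ | ⟨pos, next, skip, tail⟩)
      obtain ⟨hs, hp, hd, hc⟩ := ih.mp tail
      exact ⟨⟨fun y hy => (next y hy).1, hs⟩, ⟨pos, hp⟩, ⟨skip, hd⟩,
        ⟨fun y hy => (next y hy).2, hc⟩⟩
    · rintro ⟨⟨hle, hs⟩, ⟨pos, hp⟩, ⟨skip, hd⟩, ⟨hmod, hc⟩⟩
      exact .cons pos (fun y hy => ⟨hle y hy, hmod y hy⟩) skip (ih.mpr ⟨hs, hp, hd, hc⟩)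

theorem Admissible.cons_of_add_two_le {x : ℕ} {l : List ℕ} (hl : Admissible l) (hx : 1 ≤ x)
    (h₀ : ∀ y ∈ l[0]?, x + 2 ≤ y) (h₁ : ∀ z ∈ l[1]?, x + 3 ≤ z) : Admissible (x :: l) :=
  .cons hx (fun y hy => have := h₀ y hy; ⟨by omega, by omega⟩) h₁ hl

theorem Admissible.cons_cons {x y : ℕ} {l : List ℕ} (hl : Admissible l) (hx : 1 ≤ x)
    (hxy : x ≤ y) (hyx : y ≤ x + 1) (hmod : (x + y) % 3 = 1)
    (h₀ : ∀ z ∈ l[0]?, x + 3 ≤ z) (h₁ : ∀ w ∈ l[1]?, y + 3 ≤ w) : Admissible (x :: y :: l) :=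
  .cons hx (by simpa using ⟨hxy, fun _ => hmod⟩) (by simpa using h₀)
    (hl.cons_of_add_two_le (by omega) (fun z hz => by have := h₀ z hz; omega) h₁)

def pairLow (c : ℕ) : ℕ := 2 + 3 * c / 2

def pairHigh (c : ℕ) : ℕ := pairLow c + c % 2

-- `omega` handles `3 * c / 2` poorly; the pair parts enter every estimate through this identity.
theorem two_mul_pairLow (c : ℕ) : 2 * pairLow c + c % 2 = 4 + 3 * c := by
  unfold pairLow; omega

theorem pairLow_add_pairHigh (c : ℕ) : pairLow c + pairHigh c = 4 + 3 * c := by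
  unfold pairHigh; have := two_mul_pairLow c; omega

theorem eq_pairLow_and_eq_pairHigh {c x y : ℕ} (hxy : x ≤ y) (hyx : y ≤ x + 1)
    (h : x + y = 4 + 3 * c) : x = pairLow c ∧ y = pairHigh c := by
  unfold pairHigh; have := two_mul_pairLow c; omega

-- `a` and `b` count the singletons and pairs already placed.
def assemble : ℕ → ℕ → List ℕ → List ℕ → List ℕ
  | _, _, [], [] => []
  | a, b, m :: μ, [] => (m + 1 + 2 * a + 3 * b) :: assemble (a + 1) b μ []
  | a, b, [], D :: d =>
    pairLow (D + a + 2 * b) :: pairHigh (D + a + 2 * b) :: assemble a (b + 1) [] d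
  | a, b, m :: μ, D :: d =>
    if m + 1 + 2 * a + 3 * b < pairLow (D + a + 2 * b) then
      (m + 1 + 2 * a + 3 * b) :: assemble (a + 1) b μ (D :: d)
    else pairLow (D + a + 2 * b) :: pairHigh (D + a + 2 * b) :: assemble a (b + 1) (m :: μ) d
  termination_by _ _ μ d => μ.length + d.length

theorem assemble_singleton {a b m : ℕ} {μ d : List ℕ}
    (h : ∀ D ∈ d[0]?, m + 1 + 2 * a + 3 * b < pairLow (D + a + 2 * b)) :
    assemble a b (m :: μ) d = (m + 1 + 2 * a + 3 * b) :: assemble (a + 1) b μ d := by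
  rcases d with _ | ⟨D, d⟩
  · rw [assemble]
  · rw [assemble, if_pos (by simpa using h)]

theorem assemble_pair {a b D : ℕ} {μ d : List ℕ}
    (h : ∀ m ∈ μ[0]?, pairLow (D + a + 2 * b) ≤ m + 1 + 2 * a + 3 * b) :
    assemble a b μ (D :: d) =
      pairLow (D + a + 2 * b) :: pairHigh (D + a + 2 * b) :: assemble a (b + 1) μ d := by
  rcases μ with _ | ⟨m, μ⟩
  · rw [assemble]
  · rw [assemble, if_neg (by simpa using h)]

theorem assemble_cases (a b : ℕ) (μ d : List ℕ) :
    (μ = [] ∧ d = []) ∨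
      (∃ m μ', μ = m :: μ' ∧ ∀ D ∈ d[0]?, m + 1 + 2 * a + 3 * b < pairLow (D + a + 2 * b)) ∨
      (∃ D d', d = D :: d' ∧ ∀ m ∈ μ[0]?, pairLow (D + a + 2 * b) ≤ m + 1 + 2 * a + 3 * b) := by
  rcases μ with _ | ⟨m, μ⟩ <;> rcases d with _ | ⟨D, d⟩
  · exact .inl ⟨rfl, rfl⟩
  · exact .inr (.inr ⟨D, d, rfl, by simp⟩)
  · exact .inr (.inl ⟨m, μ, rfl, by simp⟩)
  · by_cases h : m + 1 + 2 * a + 3 * b < pairLow (D + a + 2 * b)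
    · exact .inr (.inl ⟨m, μ, rfl, by simpa using h⟩)
    · exact .inr (.inr ⟨D, d, rfl, by simpa using h⟩)

@[elab_as_elim]
theorem assemble_induction {motive : ℕ → ℕ → List ℕ → List ℕ → Prop}
    (nil : ∀ a b, motive a b [] [])
    (singleton : ∀ a b m μ d, (∀ D ∈ d[0]?, m + 1 + 2 * a + 3 * b < pairLow (D + a + 2 * b)) →
      motive (a + 1) b μ d → motive a b (m :: μ) d)
    (pair : ∀ a b μ D d, (∀ m ∈ μ[0]?, pairLow (D + a + 2 * b) ≤ m + 1 + 2 * a + 3 * b) →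
      motive a (b + 1) μ d → motive a b μ (D :: d))
    (a b : ℕ) (μ d : List ℕ) : motive a b μ d := by
  induction a, b, μ, d using assemble.induct with
  | case1 a b => exact nil a b
  | case2 a b m μ ih => exact singleton a b m μ [] (by simp) ih
  | case3 a b D d ih => exact pair a b [] D d (by simp) ih
  | case4 a b m μ D d h ih => exact singleton a b m μ (D :: d) (by simpa using h) ih
  | case5 a b m μ D d h ih => exact pair a b (m :: μ) D d (by simpa using h) ih

def baseWeight (a b : ℕ) : ℕ := 3 * b ^ 2 + b + a ^ 2 + 3 * a * b

theorem length_assemble (a b : ℕ) (μ d : List ℕ) :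
    (assemble a b μ d).length = μ.length + 2 * d.length := by
  induction a, b, μ, d using assemble_induction with
  | nil => simp [assemble]
  | singleton a b m μ d h ih => simp [assemble_singleton h, ih]; omega
  | pair a b μ D d h ih => simp [assemble_pair h, ih]; omega

theorem sum_assemble (a b : ℕ) (μ d : List ℕ) :
    (assemble a b μ d).sum = baseWeight μ.length d.length + (2 * a + 3 * b) * μ.length +
      (3 * a + 6 * b) * d.length + μ.sum + 3 * d.sum := by
  induction a, b, μ, d using assemble_induction with
  | nil => simp [assemble, baseWeight]
  | singleton a b m μ d h ih =>
    simp only [assemble_singleton h, List.sum_cons, ih, List.length_cons, baseWeight]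
    ring
  | pair a b μ D d h ih =>
    simp only [assemble_pair h, List.sum_cons, ih, List.length_cons, baseWeight]
    linear_combination (pairLow_add_pairHigh (D + a + 2 * b))

theorem assemble_head_ge {a b v : ℕ} {μ d : List ℕ}
    (hμ : ∀ m ∈ μ[0]?, v ≤ m + 1 + 2 * a + 3 * b)
    (hd : ∀ D ∈ d[0]?, v ≤ pairLow (D + a + 2 * b)) :
    ∀ x ∈ (assemble a b μ d)[0]?, v ≤ x := by
  obtain ⟨rfl, rfl⟩ | ⟨m, μ, rfl, h⟩ | ⟨D, d, rfl, h⟩ := assemble_cases a b μ d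
  · simp [assemble]
  · simpa [assemble_singleton h] using hμ
  · simpa [assemble_pair h] using hd

theorem assemble_second_ge {a b v : ℕ} {μ d : List ℕ}
    (hμ : ∀ m ∈ μ[1]?, v ≤ m + 3 + 2 * a + 3 * b)
    (hd : ∀ D ∈ d[0]?, v ≤ pairHigh (D + a + 2 * b) ∧ v ≤ pairLow (D + a + 1 + 2 * b)) :
    ∀ y ∈ (assemble a b μ d)[1]?, v ≤ y := by
  obtain ⟨rfl, rfl⟩ | ⟨m, μ, rfl, h⟩ | ⟨D, d, rfl, h⟩ := assemble_cases a b μ d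
  · simp [assemble]
  · rw [assemble_singleton h]
    refine assemble_head_ge (fun m' hm' => by have := hμ m' hm'; omega) fun D hD => ?_
    simpa [Nat.add_assoc, Nat.add_comm 1] using (hd D hD).2
  · simpa [assemble_pair h] using (hd D (by simp)).1

theorem singleton_add_two_le_head {a b m : ℕ} {μ d : List ℕ} (hμ : (m :: μ).Pairwise (· ≤ ·))
    (h : ∀ D ∈ d[0]?, m + 1 + 2 * a + 3 * b < pairLow (D + a + 2 * b)) :
    ∀ y ∈ (assemble (a + 1) b μ d)[0]?, m + 1 + 2 * a + 3 * b + 2 ≤ y := by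
  refine assemble_head_ge (fun m' hm' => ?_) fun D hD => ?_
  · have := List.rel_of_pairwise_cons hμ (List.mem_of_getElem? hm'); omega
  · have := h D hD
    have := two_mul_pairLow (D + a + 2 * b); have := two_mul_pairLow (D + (a + 1) + 2 * b)
    omega

theorem admissible_assemble {a b : ℕ} {μ d : List ℕ} (hμ : μ.Pairwise (· ≤ ·))
    (hd : d.Pairwise (· ≤ ·)) : Admissible (assemble a b μ d) := by
  induction a, b, μ, d using assemble_induction with
  | nil => rw [assemble]; exact .nil
  | singleton a b m μ d h ih =>
    rw [assemble_singleton h]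
    refine (ih hμ.of_cons hd).cons_of_add_two_le (by omega) (singleton_add_two_le_head hμ h)
      (assemble_second_ge (fun m' hm' => ?_) fun D hD => ?_)
    · have := List.rel_of_pairwise_cons hμ (List.mem_of_getElem? hm'); omega
    · have := h D hD
      have := two_mul_pairLow (D + a + 2 * b); have := two_mul_pairLow (D + (a + 1) + 2 * b)
      have := two_mul_pairLow (D + (a + 1) + 1 + 2 * b)
      unfold pairHigh; omega
  | pair a b μ D d h ih =>
    rw [assemble_pair h]
    have hD : ∀ D' ∈ d, D ≤ D' := fun D' hD' => List.rel_of_pairwise_cons hd hD'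
    have := two_mul_pairLow (D + a + 2 * b)
    refine (ih hμ hd.of_cons).cons_cons (by omega) (by unfold pairHigh; omega)
      (by unfold pairHigh; omega) (by rw [pairLow_add_pairHigh]; omega)
      (assemble_head_ge (fun m hm => ?_) fun D' hD' => ?_)
      (assemble_second_ge (fun m' hm' => ?_) fun D' hD' => ?_)
    · have := h m hm; omega
    · have := hD D' (List.mem_of_getElem? hD')
      have := two_mul_pairLow (D' + a + 2 * (b + 1)); omega
    · rcases μ with _ | ⟨m, μ⟩
      · simp at hm'
      · have := h m (by simp)
        have := List.rel_of_pairwise_cons hμ (List.mem_of_getElem? hm')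
        unfold pairHigh; omega
    · have := hD D' (List.mem_of_getElem? hD')
      have := two_mul_pairLow (D' + a + 2 * (b + 1))
      have := two_mul_pairLow (D' + a + 1 + 2 * (b + 1))
      unfold pairHigh; omega

def disassemble : ℕ → ℕ → List ℕ → List ℕ × List ℕ
  | a, b, x :: y :: l =>
    if y ≤ x + 1 then
      ((disassemble a (b + 1) l).1, ((x + y - 4) / 3 - (a + 2 * b)) :: (disassemble a (b + 1) l).2)
    else
      ((x - (1 + 2 * a + 3 * b)) :: (disassemble (a + 1) b (y :: l)).1,
        (disassemble (a + 1) b (y :: l)).2)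
  | a, b, [x] => ([x - (1 + 2 * a + 3 * b)], [])
  | _, _, [] => ([], [])

theorem disassemble_cons_of_lt {a b x : ℕ} {l : List ℕ} (h : ∀ y ∈ l[0]?, x + 1 < y) :
    disassemble a b (x :: l) =
      ((x - (1 + 2 * a + 3 * b)) :: (disassemble (a + 1) b l).1, (disassemble (a + 1) b l).2) := by
  rcases l with _ | ⟨y, l⟩
  · simp [disassemble]
  · rw [disassemble, if_neg (by simp at h; omega)]

theorem disassemble_cons_cons {a b x y : ℕ} {l : List ℕ} (h : y ≤ x + 1) :
    disassemble a b (x :: y :: l) = ((disassemble a (b + 1) l).1,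
      ((x + y - 4) / 3 - (a + 2 * b)) :: (disassemble a (b + 1) l).2) := by
  rw [disassemble, if_pos h]

theorem disassemble_assemble {a b : ℕ} {μ d : List ℕ} (hμ : μ.Pairwise (· ≤ ·))
    (hd : d.Pairwise (· ≤ ·)) : disassemble a b (assemble a b μ d) = (μ, d) := by
  induction a, b, μ, d using assemble_induction with
  | nil => simp [assemble, disassemble]
  | singleton a b m μ d h ih =>
    rw [assemble_singleton h, disassemble_cons_of_lt
      fun y hy => by have := singleton_add_two_le_head hμ h y hy; omega, ih hμ.of_cons hd]
    simp only [Prod.mk.injEq, List.cons.injEq, and_true]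
    omega
  | pair a b μ D d h ih =>
    rw [assemble_pair h, disassemble_cons_cons (by unfold pairHigh; omega), ih hμ hd.of_cons,
      pairLow_add_pairHigh]
    simp only [Prod.mk.injEq, List.cons.injEq, true_and, and_true]
    omega

theorem pair_cons_assemble {a b D : ℕ} {μ d : List ℕ} (hd : d.Pairwise (· ≤ ·))
    (h : ∀ z ∈ (assemble a (b + 1) μ d)[0]?, pairLow (D + a + 2 * b) + 3 ≤ z) :
    (D :: d).Pairwise (· ≤ ·) ∧
      pairLow (D + a + 2 * b) :: pairHigh (D + a + 2 * b) :: assemble a (b + 1) μ d =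
        assemble a b μ (D :: d) := by
  have := two_mul_pairLow (D + a + 2 * b)
  obtain ⟨rfl, rfl⟩ | ⟨m, μ, rfl, hm⟩ | ⟨D', d, rfl, hD'⟩ := assemble_cases a (b + 1) μ d
  · simp [assemble]
  · simp only [assemble_singleton hm, List.getElem?_cons_zero, Option.mem_def,
      Option.some.injEq, forall_eq'] at h
    refine ⟨pairwise_le_cons_iff.mpr ⟨fun D' hD' => ?_, hd⟩, by
      rw [assemble_pair (b := b) (by simp; omega), assemble_singleton hm]⟩
    have := hm D' hD'
    have := two_mul_pairLow (D' + a + 2 * (b + 1))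
    omega
  · simp only [assemble_pair hD', List.getElem?_cons_zero, Option.mem_def,
      Option.some.injEq, forall_eq'] at h
    have := two_mul_pairLow (D' + a + 2 * (b + 1))
    refine ⟨pairwise_le_cons_iff.mpr ⟨by simp; omega, hd⟩, ?_⟩
    rw [assemble_pair (b := b) (d := D' :: d) fun m hm => by have := hD' m hm; omega,
      assemble_pair hD']

theorem singleton_cons_assemble {a b m : ℕ} {μ d : List ℕ} (hμ : μ.Pairwise (· ≤ ·))
    (h₀ : ∀ y ∈ (assemble (a + 1) b μ d)[0]?, m + 1 + 2 * a + 3 * b + 2 ≤ y)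
    (h₁ : ∀ z ∈ (assemble (a + 1) b μ d)[1]?, m + 1 + 2 * a + 3 * b + 3 ≤ z) :
    (m :: μ).Pairwise (· ≤ ·) ∧
      (m + 1 + 2 * a + 3 * b) :: assemble (a + 1) b μ d = assemble a b (m :: μ) d := by
  obtain ⟨rfl, rfl⟩ | ⟨m', μ, rfl, hm'⟩ | ⟨D, d, rfl, hD⟩ := assemble_cases (a + 1) b μ d
  · simp [assemble]
  · simp only [assemble_singleton hm', List.getElem?_cons_zero, Option.mem_def,
      Option.some.injEq, forall_eq'] at h₀
    refine ⟨pairwise_le_cons_iff.mpr ⟨by simp; omega, hμ⟩, ?_⟩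
    rw [assemble_singleton (μ := m' :: μ) fun D hD => ?_, assemble_singleton hm']
    have := hm' D hD
    have := two_mul_pairLow (D + a + 2 * b); have := two_mul_pairLow (D + (a + 1) + 2 * b)
    omega
  · simp only [assemble_pair hD, List.getElem?_cons_zero, List.getElem?_cons_succ,
      Option.mem_def, Option.some.injEq, forall_eq'] at h₀ h₁
    have := two_mul_pairLow (D + a + 2 * b); have := two_mul_pairLow (D + (a + 1) + 2 * b)
    unfold pairHigh at h₁
    refine ⟨pairwise_le_cons_iff.mpr ⟨fun m' hm' => ?_, hμ⟩, ?_⟩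
    · have := hD m' hm'; omega
    · rw [assemble_singleton (by simp; omega), assemble_pair hD]

theorem exists_assemble_eq {a b : ℕ} {l : List ℕ} (hl : Admissible l)
    (hhead : ∀ x ∈ l[0]?, 1 + 2 * a + 3 * b ≤ x) :
    ∃ μ d, μ.Pairwise (· ≤ ·) ∧ d.Pairwise (· ≤ ·) ∧ assemble a b μ d = l := by
  induction a, b, l using disassemble.induct with
  | case1 a b x y l hclose ih =>
    rcases hl with _ | ⟨-, hxy, hx, _ | ⟨-, -, -, hl⟩⟩
    simp only [List.getElem?_cons_zero, List.getElem?_cons_succ, Option.mem_def,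
      Option.some.injEq, forall_eq'] at hxy hx hhead
    obtain ⟨hxy, hmod⟩ := hxy
    set D := (x + y - 4) / 3 - (a + 2 * b)
    have hsum : x + y = 4 + 3 * (D + a + 2 * b) := by
      have := hmod hclose; have := Nat.div_add_mod (x + y) 3; omega
    obtain ⟨hlow, hhigh⟩ := eq_pairLow_and_eq_pairHigh hxy hclose hsum
    obtain ⟨μ, d, hμ, hd, rfl⟩ := ih hl fun z hz => by have := hx z hz; omega
    obtain ⟨hd', heq⟩ := pair_cons_assemble (D := D) hd fun z hz => by have := hx z hz; omega
    exact ⟨μ, _, hμ, hd', by rw [← heq, ← hlow, ← hhigh]⟩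
  | case2 a b x y l hfar ih =>
    rcases hl with _ | ⟨-, hxy, hx, hl⟩
    simp only [List.getElem?_cons_zero, List.getElem?_cons_succ, Option.mem_def,
      Option.some.injEq, forall_eq'] at hxy hx hhead
    obtain ⟨μ, d, hμ, hd, heq⟩ := ih hl (by simp; omega)
    obtain ⟨hμ', heq'⟩ := singleton_cons_assemble (m := x - (1 + 2 * a + 3 * b)) hμ
      (by rw [heq]; simp; omega) (by rw [heq]; simpa using fun z hz => by have := hx z hz; omega)
    exact ⟨_, d, hμ', hd, by rw [← heq', heq]; congr 1; omega⟩
  | case3 a b x =>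
    simp only [List.getElem?_cons_zero, Option.mem_def, Option.some.injEq, forall_eq'] at hhead
    refine ⟨[x - (1 + 2 * a + 3 * b)], [], by simp, by simp, ?_⟩
    simp [assemble]; omega
  | case4 a b => exact ⟨[], [], by simp, by simp, by simp [assemble]⟩

def boundedLists (k B : ℕ) : Finset (List ℕ) :=
  (Fintype.piFinset fun _ : Fin k => range (B + 1)).image List.ofFn

theorem mem_boundedLists {k B : ℕ} {l : List ℕ} :
    l ∈ boundedLists k B ↔ l.length = k ∧ ∀ x ∈ l, x ≤ B := by
  simp only [boundedLists, mem_image, Fintype.mem_piFinset, mem_range, Nat.lt_succ_iff]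
  constructor
  · rintro ⟨f, hf, rfl⟩
    simpa [List.mem_ofFn] using hf
  · rintro ⟨rfl, h⟩
    exact ⟨fun i => l[i], fun i => h _ (List.getElem_mem _), List.ofFn_getElem⟩

def sortedLists (k r N : ℕ) : Finset (List ℕ) :=
  (boundedLists k N).filter fun l => l.Pairwise (· ≤ ·) ∧ r * l.sum = N

theorem mem_sortedLists {k r N : ℕ} (hr : 0 < r) {l : List ℕ} :
    l ∈ sortedLists k r N ↔ l.length = k ∧ l.Pairwise (· ≤ ·) ∧ r * l.sum = N := by
  simp only [sortedLists, mem_filter, mem_boundedLists]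
  constructor
  · tauto
  · rintro ⟨hk, hl, hN⟩
    refine ⟨⟨hk, fun x hx => ?_⟩, hl, hN⟩
    have := List.le_sum_of_mem hx
    nlinarith

theorem card_sortedLists_zero {r : ℕ} (hr : 0 < r) (N : ℕ) :
    #(sortedLists 0 r N) = if N = 0 then 1 else 0 := by
  have : sortedLists 0 r N = if N = 0 then {[]} else ∅ := by
    ext l
    rw [mem_sortedLists hr, List.length_eq_zero_iff]
    by_cases hN : N = 0 <;> simp +contextual [hN, eq_comm, hr.ne']
  rw [this]
  split_ifs <;> rfl

theorem eq_zero_cons_tail {l : List ℕ} (hl : l.Pairwise (· ≤ ·)) (h0 : 0 ∈ l) :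
    l = 0 :: l.tail := by
  obtain _ | ⟨x, l⟩ := l
  · simp at h0
  · obtain rfl | h0 := List.mem_cons.mp h0
    · rfl
    · simpa using List.rel_of_pairwise_cons hl h0

theorem card_filter_zero_mem_sortedLists {r : ℕ} (hr : 0 < r) (k N : ℕ) :
    #((sortedLists (k + 1) r N).filter (0 ∈ ·)) = #(sortedLists k r N) := by
  refine card_nbij' List.tail (List.cons 0) (fun l hl => ?_) (fun l hl => ?_)
    (fun l hl => ?_) (fun l _ => rfl)
  · simp only [coe_filter, Set.mem_ofPred_eq, mem_coe, mem_sortedLists hr] at hl ⊢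
    obtain ⟨⟨hk, hs, hN⟩, h0⟩ := hl
    have hl := eq_zero_cons_tail hs h0
    rw [hl] at hk hs hN
    simp only [List.length_cons, Nat.add_right_cancel_iff, List.sum_cons, zero_add] at hk hN
    exact ⟨hk, hs.of_cons, hN⟩
  · simp only [coe_filter, mem_coe, mem_sortedLists hr, Set.mem_ofPred_eq] at hl ⊢
    simp [hl, List.pairwise_cons]
  · simp only [coe_filter, Set.mem_ofPred_eq, mem_sortedLists hr] at hl
    exact (eq_zero_cons_tail hl.1.2.1 hl.2).symm

theorem map_sub_one_map_add_one {l : List ℕ} (h0 : 0 ∉ l) : (l.map (· - 1)).map (· + 1) = l := by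
  conv_rhs => rw [← List.map_id l]
  rw [List.map_map]
  exact List.map_congr_left fun x hx => by
    have : x ≠ 0 := fun h => h0 (h ▸ hx)
    simp only [Function.comp_apply, id_eq]; omega

theorem card_filter_zero_notMem_sortedLists {r : ℕ} (hr : 0 < r) (k N : ℕ) :
    #((sortedLists (k + 1) r N).filter (0 ∉ ·)) =
      if r * (k + 1) ≤ N then #(sortedLists (k + 1) r (N - r * (k + 1))) else 0 := by
  have sum_map_add_one (l : List ℕ) : (l.map (· + 1)).sum = l.sum + l.length := by
    simp [List.sum_map_add]
  split_ifs with hN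
  · refine card_nbij' (List.map (· - 1)) (List.map (· + 1)) (fun l hl => ?_) (fun l hl => ?_)
      (fun l hl => map_sub_one_map_add_one (mem_filter.mp hl).2) (fun l _ => ?_)
    · simp only [coe_filter, Set.mem_ofPred_eq, mem_coe, mem_sortedLists hr] at hl ⊢
      obtain ⟨⟨hk, hs, hsum⟩, h0⟩ := hl
      have := sum_map_add_one (l.map (· - 1))
      rw [map_sub_one_map_add_one h0, List.length_map] at this
      refine ⟨by simpa using hk, List.pairwise_map.mpr (hs.imp fun h => by omega), ?_⟩
      rw [this, hk, Nat.mul_add] at hsum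
      omega
    · simp only [coe_filter, Set.mem_ofPred_eq, mem_coe, mem_sortedLists hr] at hl ⊢
      obtain ⟨hk, hs, hsum⟩ := hl
      refine ⟨⟨by simpa using hk, List.pairwise_map.mpr (hs.imp fun h => by omega), ?_⟩, by simp⟩
      rw [sum_map_add_one, hk, Nat.mul_add]
      omega
    · simp [List.map_map, Function.comp_def]
  · refine card_eq_zero.mpr (filter_eq_empty_iff.mpr fun l hl h0 => hN ?_)
    obtain ⟨hk, -, hsum⟩ := (mem_sortedLists hr).mp hl
    have := l.length_le_sum_of_one_le fun x hx => Nat.one_le_iff_ne_zero.mpr fun h => h0 (h ▸ hx)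
    rw [← hsum, ← hk]
    exact Nat.mul_le_mul_left r this

theorem card_sortedLists_succ {r : ℕ} (hr : 0 < r) (k N : ℕ) :
    #(sortedLists (k + 1) r N) = #(sortedLists k r N) +
      if r * (k + 1) ≤ N then #(sortedLists (k + 1) r (N - r * (k + 1))) else 0 := by
  rw [← card_filter_add_card_filter_not (0 ∈ ·), card_filter_zero_mem_sortedLists hr,
    card_filter_zero_notMem_sortedLists hr]

theorem prod_one_sub_X_pow_mul_mk_card_sortedLists {R : Type*} [CommRing R] {r : ℕ} (hr : 0 < r)
    (k : ℕ) : (∏ j ∈ range k, (1 - X ^ (r * (j + 1)) : R⟦X⟧)) *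
      mk (fun N => (#(sortedLists k r N) : R)) = 1 := by
  induction k with
  | zero =>
    ext N
    simp [card_sortedLists_zero hr, coeff_one]
  | succ k ih =>
    have hstep : (1 - X ^ (r * (k + 1)) : R⟦X⟧) * mk (fun N => (#(sortedLists (k + 1) r N) : R)) =
        mk fun N => (#(sortedLists k r N) : R) := by
      ext N
      rw [sub_mul, one_mul, map_sub, coeff_X_pow_mul', coeff_mk, coeff_mk, coeff_mk,
        card_sortedLists_succ hr]
      split_ifs <;> push_cast <;> ring
    rw [prod_range_succ, mul_assoc, hstep, ih]

theorem inv_prod_one_sub_X_pow {K : Type*} [Field K] {r : ℕ} (hr : 0 < r) (k : ℕ) :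
    (∏ j ∈ range k, (1 - X ^ (r * (j + 1)) : K⟦X⟧))⁻¹ = mk fun N => (#(sortedLists k r N) : K) := by
  have h := prod_one_sub_X_pow_mul_mk_card_sortedLists (R := K) hr k
  refine (inv_eq_iff_mul_eq_one fun h0 => ?_).mpr (by rwa [mul_comm])
  simpa [h0] using congrArg constantCoeff h

def excessPairs (a b n : ℕ) : Finset (List ℕ × List ℕ) :=
  (boundedLists a n ×ˢ boundedLists b n).filter fun q =>
    q.1.Pairwise (· ≤ ·) ∧ q.2.Pairwise (· ≤ ·) ∧ baseWeight a b + q.1.sum + 3 * q.2.sum = n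

theorem mem_excessPairs {a b n : ℕ} {q : List ℕ × List ℕ} :
    q ∈ excessPairs a b n ↔ q.1.length = a ∧ q.2.length = b ∧ q.1.Pairwise (· ≤ ·) ∧
      q.2.Pairwise (· ≤ ·) ∧ baseWeight a b + q.1.sum + 3 * q.2.sum = n := by
  simp only [excessPairs, mem_filter, mem_product, mem_boundedLists]
  constructor
  · tauto
  · rintro ⟨h1, h2, hs1, hs2, hn⟩
    refine ⟨⟨⟨h1, fun x hx => ?_⟩, ⟨h2, fun x hx => ?_⟩⟩, hs1, hs2, hn⟩
    · have := List.le_sum_of_mem hx; omega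
    · have := List.le_sum_of_mem hx; omega

theorem filter_excessPairs {a b n : ℕ} {p : ℕ × ℕ} (hp : p ∈ antidiagonal (n - baseWeight a b))
    (hn : baseWeight a b ≤ n) :
    (excessPairs a b n).filter (fun q => (q.1.sum, 3 * q.2.sum) = p) =
      sortedLists a 1 p.1 ×ˢ sortedLists b 3 p.2 := by
  rw [HasAntidiagonal.mem_antidiagonal] at hp
  ext ⟨μ, d⟩
  simp only [mem_filter, mem_excessPairs, mem_product, mem_sortedLists one_pos,
    mem_sortedLists three_pos, Prod.ext_iff]
  constructor
  · rintro ⟨⟨h1, h2, hs1, hs2, -⟩, hsum1, hsum2⟩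
    exact ⟨⟨h1, hs1, by omega⟩, h2, hs2, hsum2⟩
  · rintro ⟨⟨h1, hs1, hsum1⟩, ⟨h2, hs2, hsum2⟩⟩
    exact ⟨⟨h1, h2, hs1, hs2, by omega⟩, by omega, hsum2⟩

theorem card_excessPairs (a b n : ℕ) :
    (#(excessPairs a b n) : ℚ) = coeff n (X ^ baseWeight a b * (qq a * qcube b)⁻¹) := by
  have hqq : (qq a)⁻¹ = mk fun N => (#(sortedLists a 1 N) : ℚ) := by
    rw [← inv_prod_one_sub_X_pow one_pos, qq]; simp only [one_mul]
  rw [PowerSeries.mul_inv_rev, qcube, inv_prod_one_sub_X_pow three_pos, hqq, coeff_X_pow_mul']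
  split_ifs with hn
  · rw [card_eq_sum_card_fiberwise (f := fun q => (q.1.sum, 3 * q.2.sum))
      (t := antidiagonal (n - baseWeight a b)), mul_comm, coeff_mul]
    · push_cast
      refine sum_congr rfl fun p hp => ?_
      rw [filter_excessPairs hp hn, card_product, coeff_mk, coeff_mk, Nat.cast_mul]
    · intro q hq
      simp only [mem_coe, mem_excessPairs, HasAntidiagonal.mem_antidiagonal] at hq ⊢
      omega
  · rw [Nat.cast_eq_zero, card_eq_zero, eq_empty_iff_forall_notMem]
    intro q hq
    have := (mem_excessPairs.mp hq).2.2.2.2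
    omega

def shapedExcessPairs (n m : ℕ) : Finset (Σ _ : ℕ × ℕ, List ℕ × List ℕ) :=
  ((range (m + 1) ×ˢ range (m + 1)).filter fun p => p.1 + 2 * p.2 = m).sigma
    fun p => excessPairs p.1 p.2 n

theorem mem_shapedExcessPairs {n m : ℕ} {x : Σ _ : ℕ × ℕ, List ℕ × List ℕ} :
    x ∈ shapedExcessPairs n m ↔ x.1 = (x.2.1.length, x.2.2.length) ∧
      x.2.1.length + 2 * x.2.2.length = m ∧ x.2.1.Pairwise (· ≤ ·) ∧ x.2.2.Pairwise (· ≤ ·) ∧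
        baseWeight x.2.1.length x.2.2.length + x.2.1.sum + 3 * x.2.2.sum = n := by
  obtain ⟨⟨a, b⟩, μ, d⟩ := x
  simp only [shapedExcessPairs, mem_sigma, mem_filter, mem_product, mem_range, mem_excessPairs,
    Prod.mk.injEq]
  constructor
  · rintro ⟨⟨-, rfl⟩, rfl, rfl, h⟩
    exact ⟨⟨rfl, rfl⟩, rfl, h⟩
  · rintro ⟨⟨rfl, rfl⟩, rfl, h⟩
    exact ⟨⟨⟨by omega, by omega⟩, rfl⟩, rfl, rfl, h⟩

theorem krb1_conditions_iff {n m : ℕ} {l : List ℕ} :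
    (IsPartitionOf n l ∧ l.length = m ∧ DiffCond 3 2 l ∧ SumCond2 1 l) ↔
      Admissible l ∧ l.sum = n ∧ l.length = m := by
  rw [admissible_iff, IsPartitionOf]
  tauto

theorem setOf_krb1_eq_image_assemble (n m : ℕ) :
    {l | IsPartitionOf n l ∧ l.length = m ∧ DiffCond 3 2 l ∧ SumCond2 1 l} =
      (shapedExcessPairs n m).image fun x => assemble 0 0 x.2.1 x.2.2 := by
  ext l
  simp only [Set.mem_ofPred_eq, krb1_conditions_iff, coe_image, Set.mem_image, mem_coe,
    mem_shapedExcessPairs]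
  constructor
  · rintro ⟨hl, rfl, rfl⟩
    obtain ⟨μ, d, hμ, hd, rfl⟩ := exists_assemble_eq (a := 0) (b := 0) hl fun x hx => by
      cases hl with
      | nil => simp at hx
      | cons pos => simp_all
    exact ⟨⟨(μ.length, d.length), μ, d⟩, ⟨rfl, by simp [length_assemble], hμ, hd,
      by simp [sum_assemble]⟩, rfl⟩
  · rintro ⟨⟨_, μ, d⟩, ⟨-, rfl, hμ, hd, rfl⟩, rfl⟩
    exact ⟨admissible_assemble hμ hd, by simp [sum_assemble], by simp [length_assemble]⟩

theorem injOn_assemble_shapedExcessPairs (n m : ℕ) :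
    Set.InjOn (fun x : Σ _ : ℕ × ℕ, List ℕ × List ℕ => assemble 0 0 x.2.1 x.2.2)
      (shapedExcessPairs n m) := by
  rintro ⟨⟨a, b⟩, μ, d⟩ hx ⟨⟨a', b'⟩, μ', d'⟩ hx' heq
  obtain ⟨hx, -, hμ, hd, -⟩ := mem_shapedExcessPairs.mp hx
  obtain ⟨hx', -, hμ', hd', -⟩ := mem_shapedExcessPairs.mp hx'
  have := disassemble_assemble (a := 0) (b := 0) hμ hd
  rw [show assemble 0 0 μ d = assemble 0 0 μ' d' from heq, disassemble_assemble hμ' hd'] at this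
  simp only [Prod.mk.injEq] at this hx hx'
  obtain ⟨⟨rfl, rfl⟩, ⟨rfl, rfl⟩, ⟨rfl, rfl⟩⟩ := And.intro this (And.intro hx hx')
  rfl

/-- Generating function for `kr₁ᵇ`, coefficient of `q^n x^m`. -/
theorem krb1_generating_function (n m : ℕ) :
    (krb1 n m : ℚ) =
      ∑ p ∈ (Finset.range (m + 1) ×ˢ Finset.range (m + 1)).filter
          (fun p => p.1 + 2 * p.2 = m),
        PowerSeries.coeff (R := ℚ) n
          ((X : PowerSeries ℚ) ^ (3 * p.2 ^ 2 + p.2 + p.1 ^ 2 + 3 * p.1 * p.2) * (qq p.1 * qcube p.2)⁻¹) := by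
  rw [krb1, setOf_krb1_eq_image_assemble, Set.ncard_coe_finset,
    card_image_of_injOn (injOn_assemble_shapedExcessPairs n m), shapedExcessPairs, card_sigma,
    Nat.cast_sum]
  exact sum_congr rfl fun p _ => card_excessPairs p.1 p.2 n
end

section
/- Let kr_5(n,m) be the number of partitions of n into m parts with at most one occurrence of the part 1 and difference at least three at distance three, such that if parts at distance two differ by at most one then their sum together with the intermediate part is ≡ 1 (mod 3). Then ∑_{n,m≥0} kr_5(n,m) q^n x^m = ∑_{n_1,n_2,n_3≥0} q^{(9n_3²+5n_3)/2 + 2n_2² + n_2 + n_1² + 6n_3n_2 + 3n_3n_1 + 2n_2n_1} (−q;q²)_{n_2} x^{3n_3+2n_2+n_1} / ((q;q)_{n_1}(q²;q²)_{n_2}(q³;q³)_{n_3}). -/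
open Finset PowerSeries

/-- `kr₅ n m`: partitions of `n` into `m` parts with at most one occurrence of the part
1, difference at least three at distance three, such that if parts at distance two
differ by at most one, their sum together with the intermediate part is ≡ 1 (mod 3). -/
noncomputable def kr5 (n m : ℕ) : ℕ :=
  Set.ncard {l : List ℕ |
    IsPartitionOf n l ∧ l.length = m ∧ l.count 1 ≤ 1 ∧ DiffCond 3 3 l ∧ SumCond3 1 l}

/-!
Both sides are determined by one system of `q`-difference equations (`IsKRSystem`) for the
coefficient `A m` of `x ^ m` and an auxiliary series `E m`: since `1 - q ^ k` is not a zero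
divisor, the system computes `A` and `E` recursively from `A 0 = E 0 = 1`.

Call a partition admissible if it satisfies the conditions of `kr5` except the one on the
part 1. Let `A m`, `C m`, `E m` (`gfA`, `gfC`, `gfE`) count the admissible partitions into `m`
parts in which 1 occurs at most once, arbitrarily often, resp. all parts but the smallest are
at least 3. Removing the parts equal to 1 and subtracting 1 (or 2) from the other parts gives
`A (m+1) = q^(m+1) (C (m+1) + A m)`, `C (m+2) = A (m+2) + q^(m+2) E m` and
`E (m+1) = q^(m+1) A (m+1) + q^(2m+1) C m`; eliminating `C` yields the system.

On the sum side, `sumSideE M` is the coefficient `sumSide M` of `x ^ M` with the summands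
weighted by `q^(2n₂)`. For `L = n₁ + 2n₂ + 3n₃` write
`1 - q^L = (1 - q^n₁) + q^n₁ (1 - q^(2n₂)) + q^(n₁+2n₂) (1 - q^(3n₃))`;
each factor `1 - q^(k nᵢ)` cancels the last factor of the `q`-Pochhammer symbol of `nᵢ` in the
denominator, which lowers `nᵢ` by one and the weight `L` by `k` (for `n₂` the numerator
`(-q; q²)_n₂` leaves a factor `1 + q^(2n₂-1)`).
-/

namespace KR5

/-! ### The `q`-difference system -/

lemma one_sub_X_pow_ne_zero {k : ℕ} (hk : k ≠ 0) : (1 - X ^ k : PowerSeries ℚ) ≠ 0 :=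
  fun h => by simpa [zero_pow hk] using congrArg constantCoeff h

structure IsKRSystem (A E : ℕ → PowerSeries ℚ) : Prop where
  A_zero : A 0 = 1
  E_zero : E 0 = 1
  A_one : (1 - X) * A 1 = X * A 0
  E_one : E 1 = A 1
  A_add_two (m : ℕ) :
    (1 - X ^ (m + 2)) * A (m + 2) = X ^ (m + 2) * A (m + 1) + X ^ (2 * m + 4) * E m
  E_add_two (m : ℕ) : E (m + 2) = A (m + 2) - X ^ (2 * m + 3) * A m - X ^ (2 * m + 4) * E m

theorem IsKRSystem.unique {A E A' E' : ℕ → PowerSeries ℚ} (h : IsKRSystem A E)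
    (h' : IsKRSystem A' E') : A = A' ∧ E = E' := by
  have key : ∀ m, (A m = A' m ∧ E m = E' m) ∧
      A (m + 1) = A' (m + 1) ∧ E (m + 1) = E' (m + 1) := by
    intro m
    induction m with
    | zero =>
      have hA : A 1 = A' 1 := mul_left_cancel₀ (one_sub_X_pow_ne_zero one_ne_zero) <| by
        rw [pow_one, h.A_one, h'.A_one, h.A_zero, h'.A_zero]
      exact ⟨⟨h.A_zero.trans h'.A_zero.symm, h.E_zero.trans h'.E_zero.symm⟩, hA,
        by rw [h.E_one, h'.E_one, hA]⟩
    | succ m ih =>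
      obtain ⟨⟨hA₀, hE₀⟩, hA₁, hE₁⟩ := ih
      have hA₂ : A (m + 2) = A' (m + 2) :=
        mul_left_cancel₀ (one_sub_X_pow_ne_zero (Nat.succ_ne_zero _)) <| by
          rw [h.A_add_two, h'.A_add_two, hA₁, hE₀]
      exact ⟨⟨hA₁, hE₁⟩, hA₂, by rw [h.E_add_two, h'.E_add_two, hA₂, hA₀, hE₀]⟩
  exact ⟨funext fun m => (key m).1.1, funext fun m => (key m).1.2⟩

/-! ### Admissible partitions -/

lemma diffCond_map_add (k d c : ℕ) (l : List ℕ) :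
    DiffCond k d (l.map (· + c)) ↔ DiffCond k d l := by
  simp only [DiffCond, List.length_map, List.getElem_map]
  exact forall_congr' fun j => forall_congr' fun h => by omega

lemma sumCond3_map_add (r c : ℕ) (l : List ℕ) :
    SumCond3 r (l.map (· + c)) ↔ SumCond3 r l := by
  simp only [SumCond3, List.length_map, List.getElem_map]
  refine forall_congr' fun j => forall_congr' fun h => ?_
  constructor <;> intro H hle <;> have := H (by omega) <;> omega

lemma diffCond_cons (k a : ℕ) (t : List ℕ) :
    DiffCond k 3 (a :: t) ↔ DiffCond k 3 t ∧ ∀ h : 2 < t.length, a + k ≤ t[2] := by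
  refine ⟨fun H => ⟨fun j h => ?_, fun h => ?_⟩, fun ⟨H, H₀⟩ j h => ?_⟩
  · exact H (j + 1) (by simp; omega)
  · simpa using H 0 (by simp; omega)
  · cases j with
    | zero => simpa using H₀ (by simp at h; omega)
    | succ j => simpa using H j (by simp at h; omega)

lemma sumCond3_cons (r a : ℕ) (t : List ℕ) :
    SumCond3 r (a :: t) ↔ SumCond3 r t ∧
      ∀ h : 1 < t.length, t[1] ≤ a + 1 → (a + t[0] + t[1]) % 3 = r := by
  refine ⟨fun H => ⟨fun j h => ?_, fun h => ?_⟩, fun ⟨H, H₀⟩ j h => ?_⟩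
  · exact H (j + 1) (by simp; omega)
  · simpa using H 0 (by simp; omega)
  · cases j with
    | zero => simpa using H₀ (by simp at h; omega)
    | succ j => simpa using H j (by simp at h; omega)

structure Admissible (l : List ℕ) : Prop where
  sorted : l.Pairwise (· ≤ ·)
  pos : ∀ x ∈ l, 0 < x
  diffCond : DiffCond 3 3 l
  sumCond : SumCond3 1 l

lemma admissible_cons {a : ℕ} {t : List ℕ} :
    Admissible (a :: t) ↔ Admissible t ∧ 0 < a ∧ (∀ x ∈ t, a ≤ x) ∧
      (∀ h : 2 < t.length, a + 3 ≤ t[2]) ∧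
      ∀ h : 1 < t.length, t[1] ≤ a + 1 → (a + t[0] + t[1]) % 3 = 1 := by
  constructor
  · rintro ⟨hs, hp, hd, hsc⟩
    rw [List.pairwise_cons] at hs
    rw [List.forall_mem_cons] at hp
    rw [diffCond_cons] at hd
    rw [sumCond3_cons] at hsc
    exact ⟨⟨hs.2, hp.2, hd.1, hsc.1⟩, hp.1, hs.1, hd.2, hsc.2⟩
  · rintro ⟨⟨hs, hp, hd, hsc⟩, ha, hle, hd₀, hsc₀⟩
    exact ⟨List.pairwise_cons.2 ⟨hle, hs⟩, List.forall_mem_cons.2 ⟨ha, hp⟩,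
      (diffCond_cons _ _ _).2 ⟨hd, hd₀⟩, (sumCond3_cons _ _ _).2 ⟨hsc, hsc₀⟩⟩

namespace Admissible

variable {l t : List ℕ}

lemma map_add (h : Admissible l) (c : ℕ) : Admissible (l.map (· + c)) where
  sorted := List.pairwise_map.2 (h.sorted.imp fun hxy => by omega)
  pos x hx := by obtain ⟨y, hy, rfl⟩ := List.mem_map.1 hx; have := h.pos y hy; omega
  diffCond := (diffCond_map_add _ _ _ _).2 h.diffCond
  sumCond := (sumCond3_map_add _ _ _).2 h.sumCond

lemma of_map_add {c : ℕ} (h : Admissible (l.map (· + c))) (hpos : ∀ x ∈ l, 0 < x) :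
    Admissible l where
  sorted := (List.pairwise_map.1 h.sorted).imp fun hxy => by omega
  pos := hpos
  diffCond := (diffCond_map_add _ _ _ _).1 h.diffCond
  sumCond := (sumCond3_map_add _ _ _).1 h.sumCond

lemma exists_eq_map_add {c : ℕ} (h : Admissible l) (hc : ∀ x ∈ l, c < x) :
    ∃ t, l = t.map (· + c) ∧ Admissible t := by
  have hl : (l.map (· - c)).map (· + c) = l := by
    rw [List.map_map]
    exact (List.map_congr_left fun x hx => by have := hc x hx; simp; omega).trans (List.map_id l)
  refine ⟨l.map (· - c), hl.symm, of_map_add (hl ▸ h) ?_⟩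
  simpa using fun x hx => hc x hx

lemma exists_eq_map_add_one (h : Admissible l) (h1 : 1 ∉ l) :
    ∃ t, l = t.map (· + 1) ∧ Admissible t :=
  h.exists_eq_map_add fun x hx => by
    have := h.pos x hx
    have : x ≠ 1 := fun hx1 => h1 (hx1 ▸ hx)
    omega

lemma getElem_le (h : Admissible l) {i j : ℕ} (hij : i ≤ j) (hj : j < l.length) :
    l[i] ≤ l[j] := by
  rcases hij.eq_or_lt with rfl | hlt
  · rfl
  · exact List.pairwise_iff_getElem.1 h.sorted i j _ hj hlt

lemma eq_one_cons (h : Admissible l) (h1 : 1 ∈ l) : ∃ t, l = 1 :: t := by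
  cases l with
  | nil => simp at h1
  | cons x t =>
    have hx := h.pos x List.mem_cons_self
    have : x ≤ 1 := by
      rcases List.mem_cons.1 h1 with h1 | h1
      · omega
      · exact (List.pairwise_cons.1 h.sorted).1 1 h1
    exact ⟨t, by rw [show x = 1 by omega]⟩

lemma eq_one_cons_one_cons (h : Admissible l) (hc : 2 ≤ l.count 1) : ∃ r, l = 1 :: 1 :: r := by
  obtain ⟨t, rfl⟩ := h.eq_one_cons (List.count_pos_iff.1 (by omega))
  rw [List.count_cons_self] at hc
  obtain ⟨r, rfl⟩ := (admissible_cons.1 h).1.eq_one_cons (List.count_pos_iff.1 (by omega))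
  exact ⟨r, rfl⟩

lemma count_one_le_one_iff (h : Admissible l) : l.count 1 ≤ 1 ↔ ∀ x ∈ l.tail, 2 ≤ x := by
  cases l with
  | nil => simp
  | cons x t =>
    have hx := h.pos x List.mem_cons_self
    have hxt := (List.pairwise_cons.1 h.sorted).1
    simp only [List.tail_cons, List.count_cons, beq_iff_eq]
    constructor
    · intro hc y hy
      by_contra hy2
      have hy1 : y = 1 := by have := h.pos y (List.mem_cons_of_mem _ hy); omega
      have := List.count_pos_iff.2 (hy1 ▸ hy)
      have := hxt y hy
      split_ifs at hc <;> omega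
    · intro ht
      rw [List.count_eq_zero.2 fun h1 => by have := ht 1 h1; omega]
      split_ifs <;> omega

lemma two_le_getElem_one (h : Admissible l) (hc : l.count 1 ≤ 1) (h1 : 1 < l.length) :
    2 ≤ l[1] := by
  cases l with
  | nil => simp at h1
  | cons x t => exact h.count_one_le_one_iff.1 hc _ (List.getElem_mem (l := t) _)

lemma three_le_getElem_two (h : Admissible l) (hc : l.count 1 ≤ 1) (h2 : 2 < l.length) :
    3 ≤ l[2] := by
  have hs : l[2] ≤ l[0] + 1 → (l[0] + l[1] + l[2]) % 3 = 1 := h.sumCond 0 h2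
  have h01 : l[0] ≤ l[1] := h.getElem_le zero_le_one (by omega)
  have h12 : l[1] ≤ l[2] := h.getElem_le one_le_two h2
  have h0 : 0 < l[0] := h.pos _ (List.getElem_mem _)
  have h1 := h.two_le_getElem_one hc (by omega)
  omega

lemma two_le_getElem_two (h : Admissible l) (h2 : 2 < l.length) : 2 ≤ l[2] := by
  have hs : l[2] ≤ l[0] + 1 → (l[0] + l[1] + l[2]) % 3 = 1 := h.sumCond 0 h2
  have h01 : l[0] ≤ l[1] := h.getElem_le zero_le_one (by omega)
  have h12 : l[1] ≤ l[2] := h.getElem_le one_le_two h2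
  have h0 : 0 < l[0] := h.pos _ (List.getElem_mem _)
  omega

lemma one_notMem_map_add_one (h : Admissible t) : 1 ∉ t.map (· + 1) := fun h1 => by
  obtain ⟨x, hx, hx1⟩ := List.mem_map.1 h1
  have := h.pos x hx
  omega

lemma one_cons_map_add_one (h : Admissible t) (hc : t.count 1 ≤ 1) :
    Admissible (1 :: t.map (· + 1)) := by
  refine admissible_cons.2 ⟨h.map_add 1, one_pos, by simp, fun h2 => ?_, fun h1 hle => ?_⟩
  · have := h.three_le_getElem_two hc (by simpa using h2)
    simp only [List.getElem_map]
    omega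
  · have := h.two_le_getElem_one hc (by simpa using h1)
    simp only [List.getElem_map] at hle
    omega

lemma one_cons_one_cons_map_add_one (h : Admissible t) (ht : ∀ x ∈ t.tail, 3 ≤ x) :
    Admissible (1 :: 1 :: t.map (· + 1)) := by
  cases t with
  | nil => exact admissible_cons.2 ⟨admissible_cons.2 ⟨h.map_add 1, by simp⟩, by simp⟩
  | cons x r =>
    have hr : ∀ y ∈ r, 3 ≤ y := ht
    have hx := h.pos x List.mem_cons_self
    have hinner : Admissible (1 :: (x :: r).map (· + 1)) := by
      refine admissible_cons.2 ⟨h.map_add 1, one_pos, by simp, fun h2 => ?_, fun h1 hle => ?_⟩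
      · simp only [List.length_map, List.length_cons] at h2
        simp only [List.map_cons, List.getElem_cons_succ, List.getElem_map]
        have := hr r[1] (List.getElem_mem _)
        omega
      · simp only [List.length_map, List.length_cons] at h1
        simp only [List.map_cons, List.getElem_cons_succ, List.getElem_map] at hle
        have := hr r[0] (List.getElem_mem _)
        omega
    refine admissible_cons.2 ⟨hinner, one_pos, by simp, fun h2 => ?_, fun h1 hle => ?_⟩
    · simp only [List.map_cons, List.length_cons, List.length_map] at h2
      simp only [List.map_cons, List.getElem_cons_succ, List.getElem_map]
      have := hr r[0] (List.getElem_mem _)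
      omega
    · simp only [List.map_cons, List.getElem_cons_succ, List.getElem_cons_zero] at hle ⊢
      omega

lemma one_cons_map_add_two (h : Admissible t) : Admissible (1 :: t.map (· + 2)) := by
  refine admissible_cons.2 ⟨h.map_add 2, one_pos, by simp, fun h2 => ?_, fun h1 hle => ?_⟩
  · have := h.two_le_getElem_two (by simpa using h2)
    simp only [List.getElem_map]
    omega
  · simp only [List.length_map] at h1
    simp only [List.getElem_map] at hle
    have := h.pos t[1] (List.getElem_mem _)
    omega

lemma exists_eq_one_cons_map_add_one (h : Admissible l) (h1 : 1 ∈ l) (hc : l.count 1 ≤ 1) :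
    ∃ t, l = 1 :: t.map (· + 1) ∧ Admissible t ∧ t.count 1 ≤ 1 := by
  obtain ⟨l', rfl⟩ := h.eq_one_cons h1
  obtain ⟨hl', -, -, -, hsc⟩ := admissible_cons.1 h
  rw [List.count_cons_self] at hc
  obtain ⟨t, rfl, ht⟩ := hl'.exists_eq_map_add_one fun h1 => by
    have := List.count_pos_iff.2 h1
    omega
  refine ⟨t, rfl, ht, not_lt.1 fun hc2 => ?_⟩
  obtain ⟨r, rfl⟩ := ht.eq_one_cons_one_cons hc2
  -- the parts `1, 2, 2` would violate the sum condition
  simpa using hsc (by simp)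

lemma exists_eq_one_cons_one_cons_map_add_one (h : Admissible l) (hc : 2 ≤ l.count 1) :
    ∃ t, l = 1 :: 1 :: t.map (· + 1) ∧ Admissible t ∧ ∀ x ∈ t.tail, 3 ≤ x := by
  obtain ⟨r, rfl⟩ := h.eq_one_cons_one_cons hc
  obtain ⟨hr', -, -, hd, hsc⟩ := admissible_cons.1 h
  have hr := (admissible_cons.1 hr').1
  -- three parts `1` would violate the sum condition
  have h1r : 1 ∉ r := fun h1 => by
    obtain ⟨r', rfl⟩ := hr.eq_one_cons h1
    have := hsc (by simp)
    simp only [List.getElem_cons_succ, List.getElem_cons_zero] at this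
    simp at this
  obtain ⟨t, rfl, ht⟩ := hr.exists_eq_map_add_one h1r
  refine ⟨t, rfl, ht, ?_⟩
  cases t with
  | nil => simp
  | cons x s =>
    cases s with
    | nil => simp
    | cons y s =>
      have hy : 3 ≤ y := by simpa using hd (by simp)
      simp only [List.tail_cons, List.forall_mem_cons]
      have hys := (List.pairwise_cons.1 (admissible_cons.1 ht).1.sorted).1
      exact ⟨hy, fun z hz => hy.trans (hys z hz)⟩

lemma exists_eq_one_cons_map_add_two (h : Admissible l) (h1 : 1 ∈ l)
    (ht : ∀ x ∈ l.tail, 3 ≤ x) :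
    ∃ t, l = 1 :: t.map (· + 2) ∧ Admissible t := by
  obtain ⟨l', rfl⟩ := h.eq_one_cons h1
  obtain ⟨t, rfl, ht'⟩ := (admissible_cons.1 h).1.exists_eq_map_add (c := 2) fun x hx => by
    have := ht x hx
    omega
  exact ⟨t, rfl, ht'⟩

end Admissible

/-! ### Generating functions of admissible partitions -/

lemma finite_setOf_sum_length (n m : ℕ) : {l : List ℕ | l.sum = n ∧ l.length = m}.Finite := by
  refine (Set.finite_range fun f : Fin m → Fin (n + 1) => List.ofFn fun i => (f i : ℕ)).subset
    ?_
  rintro l ⟨rfl, rfl⟩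
  exact ⟨fun i => ⟨l[i], Nat.lt_succ_of_le (List.le_sum_of_mem (List.getElem_mem _))⟩,
    List.ofFn_getElem⟩

lemma sum_map_add_const (c : ℕ) (l : List ℕ) : (l.map (· + c)).sum = l.sum + c * l.length := by
  induction l with
  | nil => simp
  | cons x l ih => simp only [List.map_cons, List.sum_cons, List.length_cons, ih]; ring

noncomputable def gf (P : List ℕ → Prop) (m : ℕ) : PowerSeries ℚ :=
  mk fun n => ({l | Admissible l ∧ l.sum = n ∧ l.length = m ∧ P l}.ncard : ℚ)

lemma gf_congr {P Q : List ℕ → Prop} {m : ℕ} (h : ∀ l, Admissible l → (P l ↔ Q l)) :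
    gf P m = gf Q m := by
  ext n
  simp only [gf, coeff_mk]
  congr 3
  ext l
  exact ⟨fun ⟨hl, hs, hm, hP⟩ => ⟨hl, hs, hm, (h l hl).1 hP⟩,
    fun ⟨hl, hs, hm, hQ⟩ => ⟨hl, hs, hm, (h l hl).2 hQ⟩⟩

lemma gf_eq_add (Q P : List ℕ → Prop) (m : ℕ) :
    gf P m = gf (fun l => Q l ∧ P l) m + gf (fun l => ¬Q l ∧ P l) m := by
  ext n
  have hfin (R : List ℕ → Prop) :
      {l | Admissible l ∧ l.sum = n ∧ l.length = m ∧ R l}.Finite :=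
    (finite_setOf_sum_length n m).subset fun l hl => ⟨hl.2.1, hl.2.2.1⟩
  simp only [gf, coeff_mk, map_add]
  rw [← Nat.cast_add, ← Set.ncard_union_eq _ (hfin _) (hfin _)]
  · congr 2
    ext l
    simp only [Set.mem_ofPred_eq, Set.mem_union]
    tauto
  · exact Set.disjoint_left.2 fun l h₁ h₂ => h₂.2.2.2.1 h₁.2.2.2.1

lemma gf_eq_zero {P : List ℕ → Prop} {m : ℕ} (h : ∀ l, l.length = m → ¬P l) :
    gf P m = 0 := by
  ext n
  simp only [gf, coeff_mk, map_zero, Nat.cast_eq_zero]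
  convert Set.ncard_empty (List ℕ)
  exact Set.eq_empty_of_forall_notMem fun l hl => h l hl.2.2.1 hl.2.2.2

lemma gf_zero {P : List ℕ → Prop} (hP : P []) : gf P 0 = 1 := by
  ext n
  have hnil : Admissible [] := ⟨.nil, by simp, fun _ h => by simp at h, fun _ h => by simp at h⟩
  simp only [gf, coeff_mk, coeff_one, List.length_eq_zero_iff]
  split_ifs with hn
  · subst hn
    rw [show {l : List ℕ | Admissible l ∧ l.sum = 0 ∧ l = [] ∧ P l} = {[]} by
      ext l
      constructor
      · exact fun h => h.2.2.1
      · rintro rfl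
        exact ⟨hnil, rfl, rfl, hP⟩]
    simp
  · convert (congrArg (Nat.cast : ℕ → ℚ) (Set.ncard_empty (List ℕ))).trans Nat.cast_zero
    refine Set.eq_empty_of_forall_notMem fun l hl => ?_
    obtain ⟨-, hs, rfl, -⟩ := hl
    exact hn hs.symm

/-- Adding `c` to every part and then prepending `j` parts equal to 1 is a bijection between
the partitions counted by `gf Q m` and those counted by `gf P (m + j)`. -/
lemma gf_shift (j c : ℕ) {P Q : List ℕ → Prop} {m : ℕ}
    (hf : ∀ t, Admissible t → Q t →
      Admissible (List.replicate j 1 ++ t.map (· + c)) ∧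
        P (List.replicate j 1 ++ t.map (· + c)))
    (hg : ∀ l, Admissible l → P l →
      ∃ t, l = List.replicate j 1 ++ t.map (· + c) ∧ Admissible t ∧ Q t) :
    gf P (m + j) = X ^ (j + c * m) * gf Q m := by
  set f : List ℕ → List ℕ := fun t => List.replicate j 1 ++ t.map (· + c)
  have hinj : f.Injective := fun s t hst =>
    List.map_injective_iff.2 (add_left_injective c) (List.append_cancel_left hst)
  have hsum (t : List ℕ) : (f t).sum = t.sum + (j + c * t.length) := by
    simp only [f, List.sum_append, List.sum_const_nat, sum_map_add_const]
    ring
  have hlen (t : List ℕ) : (f t).length = t.length + j := by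
    simp only [f, List.length_append, List.length_replicate, List.length_map]
    ring
  have key (N : ℕ) : {l | Admissible l ∧ l.sum = N ∧ l.length = m + j ∧ P l} =
      f '' {t | Admissible t ∧ t.sum + (j + c * m) = N ∧ t.length = m ∧ Q t} := by
    ext l
    constructor
    · rintro ⟨hl, rfl, hlm, hP⟩
      obtain ⟨t, rfl, ht, hQ⟩ := hg l hl hP
      have htm : t.length = m := by rw [hlen] at hlm; omega
      exact ⟨t, ⟨ht, by rw [hsum, htm], htm, hQ⟩, rfl⟩
    · rintro ⟨t, ⟨ht, rfl, rfl, hQ⟩, rfl⟩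
      exact ⟨(hf t ht hQ).1, hsum t, hlen t, (hf t ht hQ).2⟩
  ext N
  simp only [gf, coeff_X_pow_mul', coeff_mk]
  rw [key, Set.ncard_image_of_injective _ hinj]
  split_ifs with hN
  · congr 3
    ext t
    constructor <;> rintro ⟨ht, hs, hm, hQ⟩ <;> exact ⟨ht, by omega, hm, hQ⟩
  · convert (congrArg (Nat.cast : ℕ → ℚ) (Set.ncard_empty (List ℕ))).trans Nat.cast_zero
    exact Set.eq_empty_of_forall_notMem fun t ht => hN (by have := ht.2.1; omega)

noncomputable def gfA (m : ℕ) : PowerSeries ℚ := gf (fun l => l.count 1 ≤ 1) m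

noncomputable def gfC (m : ℕ) : PowerSeries ℚ := gf (fun _ => True) m

noncomputable def gfE (m : ℕ) : PowerSeries ℚ := gf (fun l => ∀ x ∈ l.tail, 3 ≤ x) m

lemma gf_one_notMem (P : List ℕ → Prop) (m : ℕ) :
    gf (fun l => 1 ∉ l ∧ P l) m = X ^ m * gf (fun t => P (t.map (· + 1))) m := by
  have h := gf_shift 0 1 (m := m) (P := fun l => 1 ∉ l ∧ P l) (Q := fun t => P (t.map (· + 1)))
    (fun t ht hP => ⟨ht.map_add 1, ht.one_notMem_map_add_one, hP⟩)
    (fun l hl ⟨h1, hP⟩ => by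
      obtain ⟨t, rfl, ht⟩ := hl.exists_eq_map_add_one h1
      exact ⟨t, rfl, ht, hP⟩)
  rwa [add_zero, zero_add, one_mul] at h

lemma gf_one_mem_count_le_one (m : ℕ) :
    gf (fun l => 1 ∈ l ∧ l.count 1 ≤ 1) (m + 1) = X ^ (m + 1) * gfA m := by
  have h := gf_shift 1 1 (m := m) (P := fun l => 1 ∈ l ∧ l.count 1 ≤ 1)
    (Q := fun t => t.count 1 ≤ 1)
    (fun t ht hc => ⟨ht.one_cons_map_add_one hc, List.mem_cons_self, by
      rw [List.replicate_one, List.singleton_append, List.count_cons_self,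
        List.count_eq_zero.2 ht.one_notMem_map_add_one]⟩)
    (fun l hl ⟨h1, hc⟩ => hl.exists_eq_one_cons_map_add_one h1 hc)
  rwa [one_mul, add_comm 1 m] at h

lemma gf_two_le_count (m : ℕ) :
    gf (fun l => 2 ≤ l.count 1) (m + 2) = X ^ (m + 2) * gfE m := by
  have h := gf_shift 2 1 (m := m) (P := fun l => 2 ≤ l.count 1)
    (Q := fun t => ∀ x ∈ t.tail, 3 ≤ x)
    (fun t ht hQ => ⟨ht.one_cons_one_cons_map_add_one hQ, by
      simp only [List.replicate_succ, List.replicate_zero, List.cons_append, List.nil_append,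
        List.count_cons_self]
      omega⟩)
    (fun l hl hc => hl.exists_eq_one_cons_one_cons_map_add_one hc)
  rwa [one_mul, add_comm 2 m] at h

lemma gf_one_mem_tail (m : ℕ) :
    gf (fun l => 1 ∈ l ∧ ∀ x ∈ l.tail, 3 ≤ x) (m + 1) =
      X ^ (2 * m + 1) * gfC m := by
  have h := gf_shift 1 2 (m := m) (P := fun l => 1 ∈ l ∧ ∀ x ∈ l.tail, 3 ≤ x)
    (Q := fun _ => True)
    (fun t ht _ => ⟨ht.one_cons_map_add_two, List.mem_cons_self, fun x hx => by
      obtain ⟨y, hy, rfl⟩ := List.mem_map.1 hx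
      have := ht.pos y hy
      omega⟩)
    (fun l hl ⟨h1, ht⟩ => by
      obtain ⟨t, rfl, ht'⟩ := hl.exists_eq_one_cons_map_add_two h1 ht
      exact ⟨t, rfl, ht', trivial⟩)
  rwa [add_comm 1 (2 * m)] at h

lemma gfA_succ (m : ℕ) : gfA (m + 1) = X ^ (m + 1) * (gfC (m + 1) + gfA m) := by
  have hnot : gf (fun l => ¬1 ∈ l ∧ l.count 1 ≤ 1) (m + 1) = X ^ (m + 1) * gfC (m + 1) :=
    (gf_congr fun l _ => ⟨fun h => ⟨h.1, trivial⟩,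
      fun h => ⟨h.1, by rw [List.count_eq_zero.2 h.1]; omega⟩⟩).trans
      (gf_one_notMem (fun _ => True) (m + 1))
  calc gfA (m + 1)
      = gf (fun l => 1 ∈ l ∧ l.count 1 ≤ 1) (m + 1) +
          gf (fun l => ¬1 ∈ l ∧ l.count 1 ≤ 1) (m + 1) := gf_eq_add _ _ _
    _ = _ := by rw [gf_one_mem_count_le_one, hnot]; ring

lemma gfC_eq (m : ℕ) : gfC m = gfA m + gf (fun l => 2 ≤ l.count 1) m := by
  calc gfC m
      = gf (fun l => 2 ≤ l.count 1 ∧ True) m + gf (fun l => ¬2 ≤ l.count 1 ∧ True) m :=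
        gf_eq_add _ _ _
    _ = _ := by
      rw [add_comm]
      congr 1
      · exact gf_congr fun l _ => ⟨fun h => by omega, fun h => ⟨by omega, trivial⟩⟩
      · exact gf_congr fun l _ => iff_of_eq (and_true _)

lemma gf_two_le_count_of_lt {m : ℕ} (hm : m < 2) : gf (fun l => 2 ≤ l.count 1) m = 0 :=
  gf_eq_zero fun l hl hc => by have := List.count_le_length (a := 1) (l := l); omega

lemma gfE_succ (m : ℕ) : gfE (m + 1) = X ^ (m + 1) * gfA (m + 1) + X ^ (2 * m + 1) * gfC m := by
  have hnot :
      gf (fun l => ¬1 ∈ l ∧ ∀ x ∈ l.tail, 3 ≤ x) (m + 1) = X ^ (m + 1) * gfA (m + 1) :=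
    (gf_one_notMem _ _).trans <| congrArg _ <| gf_congr fun t ht => by
      rw [ht.count_one_le_one_iff, ← List.map_tail, List.forall_mem_map]
      exact forall₂_congr fun x _ => by omega
  calc gfE (m + 1)
      = gf (fun l => 1 ∈ l ∧ ∀ x ∈ l.tail, 3 ≤ x) (m + 1) +
          gf (fun l => ¬1 ∈ l ∧ ∀ x ∈ l.tail, 3 ≤ x) (m + 1) := gf_eq_add _ _ _
    _ = _ := by rw [gf_one_mem_tail, hnot]; ring

lemma gfA_add_two (m : ℕ) :
    (1 - X ^ (m + 2)) * gfA (m + 2) = X ^ (m + 2) * gfA (m + 1) + X ^ (2 * m + 4) * gfE m := by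
  linear_combination gfA_succ (m + 1) + X ^ (m + 2) * gfC_eq (m + 2) +
    X ^ (m + 2) * gf_two_le_count m

theorem isKRSystem_gf : IsKRSystem gfA gfE where
  A_zero := gf_zero (by simp)
  E_zero := gf_zero (by simp)
  A_one := by
    linear_combination gfA_succ 0 + X * gfC_eq 1 + X * gf_two_le_count_of_lt one_lt_two
  E_one := by
    linear_combination gfE_succ 0 - gfA_succ 0 + X * gfC_eq 0 - X * gfC_eq 1 +
      X * gf_two_le_count_of_lt two_pos - X * gf_two_le_count_of_lt one_lt_two
  A_add_two := gfA_add_two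
  E_add_two m := by
    linear_combination gfE_succ (m + 1) - X ^ (m + 2) * gfA_succ m - gfA_add_two m

lemma coeff_gfA (n m : ℕ) : coeff n (gfA m) = kr5 n m := by
  rw [gfA, gf, coeff_mk, kr5]
  congr 2
  ext l
  exact ⟨fun ⟨⟨hs, hp, hd, hsc⟩, hn, hm, hc⟩ => ⟨⟨hs, hp, hn⟩, hm, hc, hd, hsc⟩,
    fun ⟨⟨hs, hp, hn⟩, hm, hc, hd, hsc⟩ => ⟨⟨hs, hp, hd, hsc⟩, hn, hm, hc⟩⟩

/-! ### The sum side -/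

/-- The summand of the right-hand side indexed by `p = (n₁, n₂, n₃)`, without `x`. -/
noncomputable def term (p : ℕ × ℕ × ℕ) : PowerSeries ℚ :=
  (X : PowerSeries ℚ) ^
      ((9 * p.2.2 ^ 2 + 5 * p.2.2) / 2 + 2 * p.2.1 ^ 2 + p.2.1 + p.1 ^ 2 +
        6 * p.2.2 * p.2.1 + 3 * p.2.2 * p.1 + 2 * p.2.1 * p.1) *
    nqodd p.2.1 * (qq p.1 * qsq p.2.1 * qcube p.2.2)⁻¹

def triples (M : ℕ) : Finset (ℕ × ℕ × ℕ) :=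
  (range (M + 1) ×ˢ range (M + 1) ×ˢ range (M + 1)).filter
    (fun p => p.1 + 2 * p.2.1 + 3 * p.2.2 = M)

lemma mem_triples {p : ℕ × ℕ × ℕ} {M : ℕ} :
    p ∈ triples M ↔ p.1 + 2 * p.2.1 + 3 * p.2.2 = M := by
  simp only [triples, mem_filter, mem_product, mem_range, and_iff_right_iff_imp]
  omega

lemma sum_triples_add {R : Type*} [AddCommMonoid R] (e : ℕ × ℕ × ℕ) {M k : ℕ}
    (hk : e.1 + 2 * e.2.1 + 3 * e.2.2 = k) (f : ℕ × ℕ × ℕ → R)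
    (hf : ∀ p, ¬e ≤ p → f p = 0) :
    ∑ p ∈ triples (M + k), f p = ∑ p ∈ triples M, f (p + e) := by
  rw [show ∑ p ∈ triples M, f (p + e) =
      ∑ p ∈ (triples M).map (addRightEmbedding e), f p by rw [sum_map]; rfl]
  refine (sum_subset (fun p hp => ?_) fun p hp hpe => hf p fun hle => hpe ?_).symm
  · obtain ⟨q, hq, rfl⟩ := mem_map.1 hp
    rw [mem_triples] at hq ⊢
    simp only [addRightEmbedding_apply, Prod.fst_add, Prod.snd_add]
    omega
  · refine mem_map.2 ⟨p - e, ?_, tsub_add_cancel_of_le hle⟩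
    obtain ⟨h1, h2, h3⟩ : e.1 ≤ p.1 ∧ e.2.1 ≤ p.2.1 ∧ e.2.2 ≤ p.2.2 :=
      ⟨hle.1, hle.2.1, hle.2.2⟩
    rw [mem_triples] at hp ⊢
    simp only [Prod.fst_sub, Prod.snd_sub]
    omega

lemma one_sub_X_pow_mul_mul_inv {k : ℕ} (hk : k ≠ 0) (f g : PowerSeries ℚ) :
    (1 - X ^ k) * (f * ((1 - X ^ k) * g)⁻¹) = f * g⁻¹ := by
  have hunit : (1 - X ^ k : PowerSeries ℚ) * (1 - X ^ k)⁻¹ = 1 :=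
    PowerSeries.mul_inv_cancel _ (by simp [zero_pow hk])
  rw [PowerSeries.mul_inv_rev]
  linear_combination (f * g⁻¹) * hunit

lemma term_succ_fst (a b c : ℕ) :
    (1 - X ^ (a + 1)) * term (a + 1, b, c) = X ^ (2 * a + 2 * b + 3 * c + 1) * term (a, b, c) := by
  have hden : qq (a + 1) * qsq b * qcube c = (1 - X ^ (a + 1)) * (qq a * qsq b * qcube c) := by
    rw [qq, prod_range_succ, ← qq]; ring
  simp only [term]
  rw [hden, one_sub_X_pow_mul_mul_inv (by omega)]
  generalize (9 * c ^ 2 + 5 * c) / 2 = t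
  ring

lemma term_succ_snd (a b c : ℕ) :
    (1 - X ^ (2 * (b + 1))) * term (a, b + 1, c) =
      X ^ (2 * a + 4 * b + 6 * c + 3) * (1 + X ^ (2 * b + 1)) * term (a, b, c) := by
  have hden : qq a * qsq (b + 1) * qcube c =
      (1 - X ^ (2 * (b + 1))) * (qq a * qsq b * qcube c) := by
    rw [qsq, prod_range_succ, ← qsq]; ring
  have hnum : nqodd (b + 1) = nqodd b * (1 + X ^ (2 * b + 1)) := prod_range_succ _ b
  simp only [term]
  rw [hden, hnum, one_sub_X_pow_mul_mul_inv (by omega)]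
  generalize (9 * c ^ 2 + 5 * c) / 2 = t
  ring

lemma term_succ_thd (a b c : ℕ) :
    (1 - X ^ (3 * (c + 1))) * term (a, b, c + 1) =
      X ^ (3 * a + 6 * b + 9 * c + 7) * term (a, b, c) := by
  have hden : qq a * qsq b * qcube (c + 1) =
      (1 - X ^ (3 * (c + 1))) * (qq a * qsq b * qcube c) := by
    rw [qcube, prod_range_succ, ← qcube]; ring
  have hexp : (9 * (c + 1) ^ 2 + 5 * (c + 1)) / 2 = (9 * c ^ 2 + 5 * c) / 2 + (9 * c + 7) := by
    rw [← Nat.add_mul_div_right _ _ two_pos]; ring_nf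
  simp only [term]
  rw [hden, hexp, one_sub_X_pow_mul_mul_inv (by omega)]
  generalize (9 * c ^ 2 + 5 * c) / 2 = t
  ring

lemma sum_one_sub_X_pow_fst (w : ℕ × ℕ × ℕ → PowerSeries ℚ) (M : ℕ) :
    ∑ p ∈ triples (M + 1), w p * ((1 - X ^ p.1) * term p) =
      X ^ (M + 1) * ∑ p ∈ triples M, w (p + (1, 0, 0)) * (X ^ p.1 * term p) := by
  rw [sum_triples_add (1, 0, 0) (k := 1) rfl _ fun p hp => ?_, mul_sum]
  · refine sum_congr rfl fun ⟨a, b, c⟩ hp => ?_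
    have hM := mem_triples.1 hp
    simp only [Prod.mk_add_mk, add_zero] at hM ⊢
    rw [term_succ_fst, show 2 * a + 2 * b + 3 * c + 1 = (M + 1) + a by omega, pow_add]
    ring
  · obtain h : p.1 = 0 := by
      by_contra h; exact hp ⟨Nat.one_le_iff_ne_zero.2 h, Nat.zero_le _, Nat.zero_le _⟩
    simp [h]

lemma sum_one_sub_X_pow_snd (w : ℕ × ℕ × ℕ → PowerSeries ℚ) (M : ℕ) :
    ∑ p ∈ triples (M + 2), w p * ((1 - X ^ (2 * p.2.1)) * term p) =
      X ^ (2 * M + 3) *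
        ∑ p ∈ triples M, w (p + (0, 1, 0)) * ((1 + X ^ (2 * p.2.1 + 1)) * term p) := by
  rw [sum_triples_add (0, 1, 0) (k := 2) rfl _ fun p hp => ?_, mul_sum]
  · refine sum_congr rfl fun ⟨a, b, c⟩ hp => ?_
    have hM := mem_triples.1 hp
    simp only [Prod.mk_add_mk, add_zero] at hM ⊢
    rw [term_succ_snd, show 2 * a + 4 * b + 6 * c + 3 = 2 * M + 3 by omega]
    ring
  · obtain h : p.2.1 = 0 := by
      by_contra h; exact hp ⟨Nat.zero_le _, Nat.one_le_iff_ne_zero.2 h, Nat.zero_le _⟩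
    simp [h]

lemma sum_one_sub_X_pow_thd (w : ℕ × ℕ × ℕ → PowerSeries ℚ) (M : ℕ) :
    ∑ p ∈ triples (M + 3), w p * ((1 - X ^ (3 * p.2.2)) * term p) =
      X ^ (3 * M + 7) * ∑ p ∈ triples M, w (p + (0, 0, 1)) * term p := by
  rw [sum_triples_add (0, 0, 1) (k := 3) rfl _ fun p hp => ?_, mul_sum]
  · refine sum_congr rfl fun ⟨a, b, c⟩ hp => ?_
    have hM := mem_triples.1 hp
    simp only [Prod.mk_add_mk, add_zero] at hM ⊢
    rw [term_succ_thd, show 3 * a + 6 * b + 9 * c + 7 = 3 * M + 7 by omega]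
    ring
  · obtain h : p.2.2 = 0 := by
      by_contra h; exact hp ⟨Nat.zero_le _, Nat.zero_le _, Nat.one_le_iff_ne_zero.2 h⟩
    simp [h]

noncomputable def sumSide (M : ℕ) : PowerSeries ℚ := ∑ p ∈ triples M, term p

noncomputable def sumSideE (M : ℕ) : PowerSeries ℚ :=
  ∑ p ∈ triples M, X ^ (2 * p.2.1) * term p

noncomputable def sumSideU (M : ℕ) : PowerSeries ℚ := ∑ p ∈ triples M, X ^ p.1 * term p

noncomputable def sumSideV (M : ℕ) : PowerSeries ℚ :=
  ∑ p ∈ triples M, X ^ (p.1 + 2 * p.2.1) * term p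

lemma sumSide_sub_sumSideU (M : ℕ) :
    sumSide (M + 1) - sumSideU (M + 1) = X ^ (M + 1) * sumSideU M := by
  have h := sum_one_sub_X_pow_fst (fun _ => 1) M
  simp only [one_mul] at h
  rw [sumSide, sumSideU, sumSideU, ← h, ← sum_sub_distrib]
  exact sum_congr rfl fun p _ => by ring

lemma sumSideE_sub_sumSideV (M : ℕ) :
    sumSideE (M + 1) - sumSideV (M + 1) = X ^ (M + 1) * sumSideV M := by
  have h := sum_one_sub_X_pow_fst (fun p => X ^ (2 * p.2.1)) M
  simp only [Prod.snd_add, Prod.fst_add, add_zero] at h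
  rw [sumSideE, sumSideV, sumSideV, ← sum_sub_distrib]
  convert h using 3 <;> rw [pow_add] <;> ring

lemma sumSide_sub_sumSideE (M : ℕ) :
    sumSide (M + 2) - sumSideE (M + 2) =
      X ^ (2 * M + 3) * sumSide M + X ^ (2 * M + 4) * sumSideE M := by
  have h := sum_one_sub_X_pow_snd (fun _ => 1) M
  simp only [one_mul] at h
  rw [sumSide, sumSideE, ← sum_sub_distrib]
  convert h using 1
  · exact sum_congr rfl fun p _ => by ring
  · rw [sumSide, sumSideE, mul_sum, mul_sum, mul_sum, ← sum_add_distrib]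
    exact sum_congr rfl fun p _ => by ring

lemma sumSideU_sub_sumSideV (M : ℕ) :
    sumSideU (M + 2) - sumSideV (M + 2) =
      X ^ (2 * M + 3) * sumSideU M + X ^ (2 * M + 4) * sumSideV M := by
  have h := sum_one_sub_X_pow_snd (fun p => X ^ p.1) M
  simp only [Prod.fst_add, add_zero] at h
  rw [sumSideU, sumSideV, ← sum_sub_distrib]
  convert h using 1
  · exact sum_congr rfl fun p _ => by ring
  · rw [sumSideU, sumSideV, mul_sum, mul_sum, mul_sum, ← sum_add_distrib]
    exact sum_congr rfl fun p _ => by ring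

lemma sumSideV_sub_sumSide (M : ℕ) :
    sumSideV (M + 3) - X ^ (M + 3) * sumSide (M + 3) = X ^ (3 * M + 7) * sumSideV M := by
  have h := sum_one_sub_X_pow_thd (fun p => X ^ (p.1 + 2 * p.2.1)) M
  simp only [Prod.fst_add, Prod.snd_add, add_zero] at h
  rw [sumSideV, sumSide, sumSideV, mul_sum, ← sum_sub_distrib, ← h]
  refine sum_congr rfl fun p hp => ?_
  rw [← mem_triples.1 hp, pow_add X (p.1 + 2 * p.2.1) (3 * p.2.2)]
  ring

lemma triples_zero : triples 0 = {(0, 0, 0)} := by decide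

lemma triples_one : triples 1 = {(1, 0, 0)} := by decide

lemma sumSideV_sub_sumSide_of_add_two (M : ℕ) :
    sumSideV (M + 2) - X ^ (M + 2) * sumSide (M + 2) =
      X ^ (2 * M + 4) * (sumSideE M - sumSideV M) := by
  cases M with
  | zero =>
    rw [sumSideV, sumSide, mul_sum, ← sum_sub_distrib, sum_eq_zero]
    · simp [sumSideE, sumSideV, triples_zero]
    · intro p hp
      have := mem_triples.1 hp
      rw [show p.1 + 2 * p.2.1 = 0 + 2 by omega, sub_self]
  | succ M =>
    rw [sumSideV_sub_sumSide, sumSideE_sub_sumSideV]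
    ring

lemma term_zero : term (0, 0, 0) = 1 := by
  simp [term, qq, qsq, qcube, nqodd]

theorem isKRSystem_sumSide : IsKRSystem sumSide sumSideE where
  A_zero := by simp [sumSide, triples_zero, term_zero]
  E_zero := by simp [sumSideE, triples_zero, term_zero]
  A_one := by simpa [sumSide, triples_zero, triples_one] using term_succ_fst 0 0 0
  E_one := by simp [sumSideE, sumSide, triples_one]
  A_add_two m := by
    -- `(1 - X ^ L) * sumSide L` is `(sumSide - sumSideU) + (sumSideU - sumSideV) +
    -- (sumSideV - X ^ L * sumSide)` at `L = m + 2`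
    linear_combination sumSide_sub_sumSideU (m + 1) + sumSideU_sub_sumSideV m +
      sumSideV_sub_sumSide_of_add_two m - X ^ (m + 2) * sumSide_sub_sumSideU m
  E_add_two m := by linear_combination -sumSide_sub_sumSideE m

end KR5

/-- Theorem 4.1, coefficient of `q^n x^m`; `p = (n₁, n₂, n₃)`. -/
theorem kr5_generating_function (n m : ℕ) :
    (kr5 n m : ℚ) =
      ∑ p ∈ (Finset.range (m + 1) ×ˢ Finset.range (m + 1) ×ˢ Finset.range (m + 1)).filter
          (fun p => p.1 + 2 * p.2.1 + 3 * p.2.2 = m),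
        PowerSeries.coeff n
          ((X : PowerSeries ℚ) ^
              ((9 * p.2.2 ^ 2 + 5 * p.2.2) / 2 + 2 * p.2.1 ^ 2 + p.2.1 + p.1 ^ 2 +
                6 * p.2.2 * p.2.1 + 3 * p.2.2 * p.1 + 2 * p.2.1 * p.1) *
            nqodd p.2.1 * (qq p.1 * qsq p.2.1 * qcube p.2.2)⁻¹) := by
  rw [← KR5.coeff_gfA, (KR5.isKRSystem_gf.unique KR5.isKRSystem_sumSide).1, KR5.sumSide,
    map_sum]
  rfl
end

section
/- As formal power series, ∑_{n≥0} q^{n²} (−q;q²)_n x^n / (q²;q²)_n = ∑_{n_1,n_2≥0} q^{4n_2² + (3n_1² − n_1)/2 + 4n_2 n_1} x^{2n_2 + n_1} / ((q;q)_{n_1} (q⁴;q⁴)_{n_2}). -/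
open Finset PowerSeries

/-!
Let `L m` and `R m` be the coefficients of `x ^ m` on the two sides, and `T a b` the summand
of `R`. Both `c = L` and `c = R` satisfy `c 0 = 1` and
`(1 - q^(2m+2)) c (m+1) = q^(2m+1) (1 + q^(2m+1)) c m`; for `L` this is immediate.
For `R`, with `M = m + 1`, the recurrence of `T` in `a` reduces it, after multiplying by `q^M`,
to `∑_{a + 2b = M} (q^M + q^(M+1) - q^(2b+1) - q^(2M+2b)) T a b = 0`. This sum telescopes:
by the recurrences of `T` in `a` and in `b`, its `b`-th summand is `D (b+1) - D b` with
`D b = (q^(2M+2b) - q^(2M-2b)) T (M-2b) b`; moreover `D 0 = 0`, and the last summand is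
`-D (M/2)` because `M - 2 (M/2) ≤ 1`.
-/

namespace PowerSeries

section Ring

variable {R : Type*} [Ring R] [Nontrivial R]

theorem constantCoeff_one_sub_X_pow_ne_zero {n : ℕ} (hn : n ≠ 0) :
    constantCoeff (1 - X ^ n : R⟦X⟧) ≠ 0 := by
  simp [hn]

theorem one_sub_X_pow_ne_zero {n : ℕ} (hn : n ≠ 0) : (1 - X ^ n : R⟦X⟧) ≠ 0 := fun h =>
  constantCoeff_one_sub_X_pow_ne_zero hn (by rw [h, map_zero])

end Ring

theorem mul_inv_mul_cancel_right {k : Type*} [Field k] (φ : k⟦X⟧) {ψ : k⟦X⟧}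
    (h : constantCoeff ψ ≠ 0) :
    ψ * (φ * ψ)⁻¹ = φ⁻¹ := by
  rw [PowerSeries.mul_inv_rev, ← mul_assoc, PowerSeries.mul_inv_cancel ψ h, one_mul]

end PowerSeries

theorem qq_succ (n : ℕ) : qq (n + 1) = qq n * (1 - X ^ (n + 1)) :=
  prod_range_succ _ _

theorem qsq_succ (n : ℕ) : qsq (n + 1) = qsq n * (1 - X ^ (2 * (n + 1))) :=
  prod_range_succ _ _

theorem qfour_succ (n : ℕ) : qfour (n + 1) = qfour n * (1 - X ^ (4 * (n + 1))) :=
  prod_range_succ _ _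

theorem nqodd_succ (n : ℕ) : nqodd (n + 1) = nqodd n * (1 + X ^ (2 * n + 1)) :=
  prod_range_succ _ _

theorem pentagonal_succ (a : ℕ) :
    (3 * (a + 1) ^ 2 - (a + 1)) / 2 = (3 * a ^ 2 - a) / 2 + (3 * a + 1) := by
  have h : 3 * (a + 1) ^ 2 - (a + 1) = 3 * a ^ 2 - a + 2 * (3 * a + 1) := by
    have ha : a ≤ 3 * a ^ 2 := by nlinarith
    have ha' : a + 1 ≤ 3 * (a + 1) ^ 2 := by nlinarith
    zify [ha, ha']
    ring
  rw [h, Nat.add_mul_div_left _ _ two_pos]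

noncomputable def gollnitzGordonCoeff (m : ℕ) : PowerSeries ℚ :=
  X ^ (m ^ 2) * nqodd m * (qsq m)⁻¹

noncomputable def capparelliTerm (a b : ℕ) : PowerSeries ℚ :=
  X ^ (4 * b ^ 2 + (3 * a ^ 2 - a) / 2 + 4 * b * a) * (qq a * qfour b)⁻¹

noncomputable def capparelliCoeff (m : ℕ) : PowerSeries ℚ :=
  ∑ b ∈ range (m / 2 + 1), capparelliTerm (m - 2 * b) b

theorem gollnitzGordonCoeff_succ (m : ℕ) :
    (1 - X ^ (2 * (m + 1))) * gollnitzGordonCoeff (m + 1) =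
      X ^ (2 * m + 1) * (1 + X ^ (2 * m + 1)) * gollnitzGordonCoeff m := by
  have hcancel := mul_inv_mul_cancel_right (qsq m)
    (constantCoeff_one_sub_X_pow_ne_zero (R := ℚ) (n := 2 * (m + 1)) (by omega))
  have hpow : (X : PowerSeries ℚ) ^ ((m + 1) ^ 2) = X ^ (m ^ 2) * X ^ (2 * m + 1) := by
    rw [← pow_add]; ring_nf
  rw [gollnitzGordonCoeff, gollnitzGordonCoeff, qsq_succ, nqodd_succ, hpow]
  linear_combination X ^ (m ^ 2) * X ^ (2 * m + 1) * (nqodd m * (1 + X ^ (2 * m + 1))) * hcancel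

theorem capparelliTerm_succ_left (a b : ℕ) :
    (1 - X ^ (a + 1)) * capparelliTerm (a + 1) b =
      X ^ (3 * a + 1 + 4 * b) * capparelliTerm a b := by
  have hcancel := mul_inv_mul_cancel_right (qq a * qfour b)
    (constantCoeff_one_sub_X_pow_ne_zero (R := ℚ) (n := a + 1) (by omega))
  have hpow : (X : ℚ⟦X⟧) ^ (4 * b ^ 2 + (3 * (a + 1) ^ 2 - (a + 1)) / 2 + 4 * b * (a + 1)) =
      X ^ (3 * a + 1 + 4 * b) * X ^ (4 * b ^ 2 + (3 * a ^ 2 - a) / 2 + 4 * b * a) := by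
    rw [← pow_add, pentagonal_succ]; ring_nf
  rw [capparelliTerm, capparelliTerm, hpow, qq_succ, mul_right_comm (qq a), mul_left_comm,
    hcancel, mul_assoc]

theorem capparelliTerm_succ_right (a b : ℕ) :
    (1 - X ^ (4 * (b + 1))) * capparelliTerm a (b + 1) =
      X ^ (4 * a + 8 * b + 4) * capparelliTerm a b := by
  have hcancel := mul_inv_mul_cancel_right (qq a * qfour b)
    (constantCoeff_one_sub_X_pow_ne_zero (R := ℚ) (n := 4 * (b + 1)) (by omega))
  have hpow : (X : ℚ⟦X⟧) ^ (4 * (b + 1) ^ 2 + (3 * a ^ 2 - a) / 2 + 4 * (b + 1) * a) =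
      X ^ (4 * a + 8 * b + 4) * X ^ (4 * b ^ 2 + (3 * a ^ 2 - a) / 2 + 4 * b * a) := by
    rw [← pow_add]; ring_nf
  rw [capparelliTerm, capparelliTerm, hpow, qfour_succ, ← mul_assoc (qq a), mul_left_comm,
    hcancel, mul_assoc]

/-- Both sides equal `X ^ (6 * a + 10 * b + 6) * capparelliTerm a b`. -/
theorem capparelliTerm_add_two_left (a b : ℕ) :
    X ^ (2 * b + 1) * (1 - X ^ (a + 1)) * ((1 - X ^ (a + 2)) * capparelliTerm (a + 2) b) =
      X ^ (2 * a + 2 * b + 2) * ((1 - X ^ (4 * (b + 1))) * capparelliTerm a (b + 1)) := by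
  rw [capparelliTerm_succ_left (a + 1), capparelliTerm_succ_right]
  linear_combination X ^ (2 * b + 1) * X ^ (3 * (a + 1) + 1 + 4 * b) * capparelliTerm_succ_left a b

theorem sum_mul_capparelliTerm_eq_zero (M : ℕ) :
    ∑ b ∈ range (M / 2 + 1), (X ^ M + X ^ (M + 1) - X ^ (2 * b + 1) - X ^ (2 * M + 2 * b)) *
      capparelliTerm (M - 2 * b) b = 0 := by
  let F : ℕ → ℚ⟦X⟧ := fun b =>
    (X ^ (2 * M + 2 * b) - X ^ (2 * M - 2 * b)) * capparelliTerm (M - 2 * b) b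
  have hstep : ∀ b ∈ range (M / 2),
      (X ^ M + X ^ (M + 1) - X ^ (2 * b + 1) - X ^ (2 * M + 2 * b)) *
        capparelliTerm (M - 2 * b) b = F (b + 1) - F b := by
    intro b hb
    rw [mem_range] at hb
    obtain ⟨a, rfl⟩ : ∃ a, M = a + 2 * b + 2 := ⟨M - 2 * b - 2, by omega⟩
    simp only [F, show a + 2 * b + 2 - 2 * b = a + 2 by omega,
      show a + 2 * b + 2 - 2 * (b + 1) = a by omega,
      show 2 * (a + 2 * b + 2) - 2 * b = 2 * a + 2 * b + 4 by omega,
      show 2 * (a + 2 * b + 2) - 2 * (b + 1) = 2 * a + 2 * b + 2 by omega]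
    linear_combination -capparelliTerm_add_two_left a b
  have hlast : (X ^ M + X ^ (M + 1) - X ^ (2 * (M / 2) + 1) - X ^ (2 * M + 2 * (M / 2))) *
      capparelliTerm (M - 2 * (M / 2)) (M / 2) = -F (M / 2) := by
    obtain ⟨K, a, ha, rfl⟩ : ∃ K a, a < 2 ∧ M = a + 2 * K :=
      ⟨M / 2, M % 2, by omega, by omega⟩
    simp only [F, show (a + 2 * K) / 2 = K by omega, show a + 2 * K - 2 * K = a by omega,
      show 2 * (a + 2 * K) - 2 * K = 2 * a + 2 * K by omega]
    interval_cases a <;> ring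
  rw [sum_range_succ, sum_congr rfl hstep, sum_range_sub, hlast]
  simp [F]

theorem X_pow_mul_capparelliCoeff (m : ℕ) :
    X ^ (m + 1) * (X ^ (2 * m + 1) * (1 + X ^ (2 * m + 1)) * capparelliCoeff m) =
      ∑ b ∈ range ((m + 1) / 2 + 1), (X ^ (2 * b + 1) + X ^ (2 * (m + 1) + 2 * b)) *
        ((1 - X ^ (m + 1 - 2 * b)) * capparelliTerm (m + 1 - 2 * b) b) := by
  rw [capparelliCoeff, mul_sum, mul_sum]
  refine (sum_congr rfl fun b hb => ?_).trans
    (sum_subset (range_subset_range.2 (by omega)) fun b hb hb' => ?_)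
  · obtain ⟨a, rfl⟩ : ∃ a, m = a + 2 * b := ⟨m - 2 * b, by rw [mem_range] at hb; omega⟩
    rw [show a + 2 * b + 1 - 2 * b = a + 1 by omega, Nat.add_sub_cancel, capparelliTerm_succ_left]
    ring
  · rw [mem_range] at hb hb'
    rw [show m + 1 - 2 * b = 0 by omega, pow_zero, sub_self, zero_mul, mul_zero]

theorem capparelliCoeff_succ (m : ℕ) :
    (1 - X ^ (2 * (m + 1))) * capparelliCoeff (m + 1) =
      X ^ (2 * m + 1) * (1 + X ^ (2 * m + 1)) * capparelliCoeff m := by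
  refine mul_left_cancel₀ (pow_ne_zero (m + 1) X_ne_zero) ?_
  rw [X_pow_mul_capparelliCoeff, ← sub_eq_zero, capparelliCoeff, mul_sum, mul_sum,
    ← sum_sub_distrib, ← sum_mul_capparelliTerm_eq_zero (m + 1)]
  refine sum_congr rfl fun b hb => ?_
  rw [mem_range] at hb
  have hexp : (X : ℚ⟦X⟧) ^ (2 * b + 1) * X ^ (m + 1 - 2 * b) = X ^ (m + 1 + 1) := by
    rw [← pow_add]; congr 1; omega
  have hexp' : (X : ℚ⟦X⟧) ^ (2 * (m + 1) + 2 * b) * X ^ (m + 1 - 2 * b) =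
      X ^ (m + 1) * X ^ (2 * (m + 1)) := by
    rw [← pow_add, ← pow_add]; congr 1; omega
  linear_combination capparelliTerm (m + 1 - 2 * b) b * (hexp + hexp')

theorem gollnitzGordonCoeff_eq_capparelliCoeff (m : ℕ) :
    gollnitzGordonCoeff m = capparelliCoeff m := by
  induction m with
  | zero => simp [gollnitzGordonCoeff, capparelliCoeff, capparelliTerm, qq, qsq, qfour, nqodd]
  | succ m ih =>
    refine mul_left_cancel₀ (one_sub_X_pow_ne_zero (n := 2 * (m + 1)) (by omega)) ?_
    rw [gollnitzGordonCoeff_succ, capparelliCoeff_succ, ih]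

theorem sum_filter_add_two_mul_eq_sum_range {M : Type*} [AddCommMonoid M] (m : ℕ)
    (f : ℕ → ℕ → M) :
    ∑ p ∈ (range (m + 1) ×ˢ range (m + 1)).filter (fun p => p.1 + 2 * p.2 = m), f p.1 p.2 =
      ∑ b ∈ range (m / 2 + 1), f (m - 2 * b) b := by
  refine sum_nbij' Prod.snd (fun b => (m - 2 * b, b)) ?_ ?_ ?_ ?_ ?_
  all_goals
    simp only [mem_filter, mem_product, mem_range, Prod.forall, Prod.mk.injEq, and_true]
  · intro a b ⟨_, hab⟩; omega
  · intro b hb; omega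
  · intro a b ⟨_, hab⟩; omega
  · intro b _; trivial
  · intro a b ⟨_, hab⟩; rw [← hab, Nat.add_sub_cancel]

/-- Identity (5.1): `∑_{n≥0} q^{n²}(-q;q²)_n x^n/(q²;q²)_n
= ∑_{n₁,n₂≥0} q^{4n₂² + (3n₁² - n₁)/2 + 4n₂n₁} x^{2n₂+n₁}/((q;q)_{n₁}(q⁴;q⁴)_{n₂})`,
stated via extraction of the coefficient of `q^N x^m` from both sides. -/
theorem gollnitz_gordon_capparelli_identity (N m : ℕ) :
    PowerSeries.coeff (R := ℚ) N ((X : PowerSeries ℚ) ^ (m ^ 2) * nqodd m * (qsq m)⁻¹) =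
      ∑ p ∈ (Finset.range (m + 1) ×ˢ Finset.range (m + 1)).filter
          (fun p => p.1 + 2 * p.2 = m),
        PowerSeries.coeff (R := ℚ) N
          ((X : PowerSeries ℚ) ^
              (4 * p.2 ^ 2 + (3 * p.1 ^ 2 - p.1) / 2 + 4 * p.2 * p.1) *
            (qq p.1 * qfour p.2)⁻¹) := by
  rw [← map_sum]
  exact congrArg (coeff N) ((gollnitzGordonCoeff_eq_capparelliCoeff m).trans
    (sum_filter_add_two_mul_eq_sum_range m capparelliTerm).symm)
end
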